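/- arXiv:2312.17574 — 11 statements merged into one kernel-verified Lean document; each statement's English description precedes it below -/
import Mathlib

section
/- If a sequence {t_m} ⊂ [0,1] satisfies ∑_{m} t_m/m = ∞, then it satisfies condition (T): for every nonnegative sequence {a_ν} ∈ ℓ₂, liminf_{m→∞} (a_m/t_m) ∑_{ν=1}^m a_ν = 0. -/
open Filter

section TemlyakovAux
open Finset

open Filter Finset

private lemma sq_pos' (k : ℕ) : (0:ℝ) < Real.sqrt (k+1) := by
  apply Real.sqrt_pos.2; positivity

private lemma sqrt_sq' (k : ℕ) : Real.sqrt (k+1) ^ 2 = (k:ℝ)+1 := by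
  rw [Real.sq_sqrt]; positivity

private lemma termA (ν : ℕ) :
    1 / Real.sqrt (ν+1) ≤ 2 * Real.sqrt (ν+1) - 2 * Real.sqrt ν := by
  have hu : (0:ℝ) ≤ Real.sqrt ν := Real.sqrt_nonneg _
  have hv := sq_pos' ν
  have hu2 : Real.sqrt ν ^ 2 = (ν:ℝ) := Real.sq_sqrt (by positivity)
  have hv2 := sqrt_sq' ν
  rw [div_le_iff₀ hv]
  nlinarith [sq_nonneg (Real.sqrt (ν+1) - Real.sqrt ν)]

private lemma lemA (m : ℕ) :
    ∑ ν ∈ range (m+1), 1 / Real.sqrt (ν+1) ≤ 2 * Real.sqrt (m+1) := by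
  calc ∑ ν ∈ range (m+1), 1 / Real.sqrt (ν+1)
      ≤ ∑ ν ∈ range (m+1), (2 * Real.sqrt (ν+1) - 2 * Real.sqrt ν) :=
        Finset.sum_le_sum fun ν _ => termA ν
    _ = 2 * Real.sqrt (m+1) - 2 * Real.sqrt 0 := by
        have := Finset.sum_range_sub (fun ν : ℕ => 2 * Real.sqrt ν) (m+1)
        simpa using this
    _ ≤ 2 * Real.sqrt (m+1) := by simp [Real.sqrt_eq_zero']

private lemma termB (m : ℕ) :
    1 / Real.sqrt (m+1) ^ 3 ≤ 4 / Real.sqrt (m+1) - 4 / Real.sqrt (m+2) := by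
  have hv := sq_pos' m
  have hw : (0:ℝ) < Real.sqrt (m+2) := Real.sqrt_pos.2 (by positivity)
  have hv2 := sqrt_sq' m
  have hw2 : Real.sqrt ((m:ℝ)+2) ^ 2 = (m:ℝ)+2 := Real.sq_sqrt (by positivity)
  have hle : Real.sqrt ((m:ℝ)+1) ≤ Real.sqrt ((m:ℝ)+2) := Real.sqrt_le_sqrt (by linarith)
  rw [div_sub_div _ _ (ne_of_gt hv) (ne_of_gt hw), div_le_div_iff₀ (by positivity) (by positivity)]
  set v := Real.sqrt ((m:ℝ)+1) with hvdef
  set w := Real.sqrt ((m:ℝ)+2) with hwdef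
  have h1 : v * w ≤ w * w := mul_le_mul_of_nonneg_right hle hw.le
  have hid : (w - v) * (w + v) = 1 := by nlinarith
  have h2 : w * (w + v) ≤ 4 * v ^ 2 := by nlinarith
  nlinarith [h2, hid, mul_pos hv hw, sub_nonneg.2 hle,
    mul_nonneg hv.le (sub_nonneg.2 hle),
    mul_le_mul_of_nonneg_right h2 (mul_nonneg hv.le (sub_nonneg.2 hle))]

private lemma lemB (ν M : ℕ) :
    ∑ m ∈ Finset.Ico ν M, 1 / Real.sqrt (m+1) ^ 3 ≤ 4 / Real.sqrt (ν+1) := by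
  rcases le_or_gt M ν with h | h
  · rw [Finset.Ico_eq_empty (by omega)]
    simp only [Finset.sum_empty]; positivity
  calc ∑ m ∈ Finset.Ico ν M, 1 / Real.sqrt (m+1) ^ 3
      ≤ ∑ m ∈ Finset.Ico ν M, (4 / Real.sqrt (m+1) - 4 / Real.sqrt (m+2)) :=
        Finset.sum_le_sum fun m _ => termB m
    _ = 4 / Real.sqrt (ν+1) - 4 / Real.sqrt (M+1) := by
        rw [Finset.sum_Ico_eq_sub _ h.le]
        have key : ∀ k : ℕ, ∑ m ∈ range k, (4 / Real.sqrt (m+1) - 4 / Real.sqrt (m+2))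
            = 4 - 4 / Real.sqrt (k+1) := by
          intro k
          have h0 := Finset.sum_range_sub' (fun n : ℕ => 4 / Real.sqrt (n+1)) k
          simp only [Nat.cast_add, Nat.cast_one, Nat.cast_zero, zero_add,
            Real.sqrt_one, div_one] at h0
          rw [← h0]
          exact Finset.sum_congr rfl fun x _ => by ring_nf
        rw [key M, key ν]
        ring
    _ ≤ 4 / Real.sqrt (ν+1) := by
        have h1 : (0:ℝ) ≤ 4 / Real.sqrt (M+1) := by positivity
        linarith

private lemma termwise_aux (x y v w : ℝ) (hv : 0 < v) (hw : 0 < w) :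
    x * y / w ^ 2 ≤ (1/2) * (x ^ 2 / (v * w) + y ^ 2 * v / w ^ 3) := by
  rw [← sub_nonneg]
  have hexp : (1/2) * (x ^ 2 / (v * w) + y ^ 2 * v / w ^ 3) - x * y / w ^ 2
      = (x * w - y * v) ^ 2 / (2 * v * w ^ 3) := by
    field_simp
    ring
  rw [hexp]
  positivity

private lemma termwise (a : ℕ → ℝ) (m ν : ℕ) :
    a m * a ν / ((m:ℝ)+1) ≤
      (1/2) * (a m ^ 2 / (Real.sqrt (ν+1) * Real.sqrt (m+1))
        + a ν ^ 2 * Real.sqrt (ν+1) / Real.sqrt (m+1) ^ 3) := by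
  have hw2 := sqrt_sq' m
  conv_lhs => rw [← hw2]
  exact termwise_aux _ _ _ _ (sq_pos' ν) (sq_pos' m)

set_option maxRecDepth 8000 in
private lemma hardy (a : ℕ → ℝ) (ha : ∀ ν, 0 ≤ a ν) (B : ℝ)
    (hB : ∀ K, ∑ ν ∈ range K, a ν ^ 2 ≤ B) (M : ℕ) :
    ∑ m ∈ range M, a m * (∑ ν ∈ range (m+1), a ν) / ((m:ℝ)+1) ≤ 3 * B := by
  have hBnn : (0:ℝ) ≤ B := by simpa using hB 0
  have step1 : ∑ m ∈ range M, a m * (∑ ν ∈ range (m+1), a ν) / ((m:ℝ)+1)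
      = ∑ m ∈ range M, ∑ ν ∈ range (m+1), a m * a ν / ((m:ℝ)+1) := by
    apply Finset.sum_congr rfl
    intro m _
    rw [Finset.mul_sum, Finset.sum_div]
  have hP : ∑ m ∈ range M, ∑ ν ∈ range (m+1),
      a m ^ 2 / (Real.sqrt (ν+1) * Real.sqrt (m+1)) ≤ 2 * B := by
    have inner : ∀ m : ℕ, ∑ ν ∈ range (m+1),
        a m ^ 2 / (Real.sqrt (ν+1) * Real.sqrt (m+1)) ≤ 2 * a m ^ 2 := by
      intro m
      have hw := sq_pos' m
      have heq : ∑ ν ∈ range (m+1), a m ^ 2 / (Real.sqrt (ν+1) * Real.sqrt (m+1))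
          = (a m ^ 2 / Real.sqrt (m+1)) * ∑ ν ∈ range (m+1), 1 / Real.sqrt (ν+1) := by
        rw [Finset.mul_sum]
        apply Finset.sum_congr rfl
        intro ν _
        rw [mul_one_div, div_div, mul_comm (Real.sqrt ((ν:ℝ)+1))]
      rw [heq]
      calc (a m ^ 2 / Real.sqrt (m+1)) * ∑ ν ∈ range (m+1), 1 / Real.sqrt (ν+1)
          ≤ (a m ^ 2 / Real.sqrt (m+1)) * (2 * Real.sqrt (m+1)) :=
            mul_le_mul_of_nonneg_left (lemA m) (by positivity)
        _ = 2 * a m ^ 2 := by field_simp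
    calc ∑ m ∈ range M, ∑ ν ∈ range (m+1), a m ^ 2 / (Real.sqrt (ν+1) * Real.sqrt (m+1))
        ≤ ∑ m ∈ range M, 2 * a m ^ 2 := Finset.sum_le_sum fun m _ => inner m
      _ = 2 * ∑ m ∈ range M, a m ^ 2 := by rw [Finset.mul_sum]
      _ ≤ 2 * B := by linarith [hB M]
  have hQ : ∑ m ∈ range M, ∑ ν ∈ range (m+1),
      a ν ^ 2 * Real.sqrt (ν+1) / Real.sqrt (m+1) ^ 3 ≤ 4 * B := by
    have swap : ∑ m ∈ range M, ∑ ν ∈ range (m+1),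
        a ν ^ 2 * Real.sqrt (ν+1) / Real.sqrt (m+1) ^ 3
        = ∑ ν ∈ range M, ∑ m ∈ Finset.Ico ν M,
            a ν ^ 2 * Real.sqrt (ν+1) / Real.sqrt (m+1) ^ 3 := by
      have h := Finset.sum_Ico_Ico_comm 0 M
        (fun i j => a i ^ 2 * Real.sqrt (i+1) / Real.sqrt (j+1) ^ 3)
      simp only [← Finset.range_eq_Ico] at h
      exact h.symm
    rw [swap]
    have inner : ∀ ν : ℕ, ∑ m ∈ Finset.Ico ν M,
        a ν ^ 2 * Real.sqrt (ν+1) / Real.sqrt (m+1) ^ 3 ≤ 4 * a ν ^ 2 := by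
      intro ν
      have hv := sq_pos' ν
      have heq : ∑ m ∈ Finset.Ico ν M, a ν ^ 2 * Real.sqrt (ν+1) / Real.sqrt (m+1) ^ 3
          = (a ν ^ 2 * Real.sqrt (ν+1)) * ∑ m ∈ Finset.Ico ν M, 1 / Real.sqrt (m+1) ^ 3 := by
        rw [Finset.mul_sum]
        apply Finset.sum_congr rfl
        intro m _
        ring
      rw [heq]
      calc (a ν ^ 2 * Real.sqrt (ν+1)) * ∑ m ∈ Finset.Ico ν M, 1 / Real.sqrt (m+1) ^ 3
          ≤ (a ν ^ 2 * Real.sqrt (ν+1)) * (4 / Real.sqrt (ν+1)) :=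
            mul_le_mul_of_nonneg_left (lemB ν M) (by positivity)
        _ = 4 * a ν ^ 2 := by field_simp
    calc ∑ ν ∈ range M, ∑ m ∈ Finset.Ico ν M,
        a ν ^ 2 * Real.sqrt (ν+1) / Real.sqrt (m+1) ^ 3
        ≤ ∑ ν ∈ range M, 4 * a ν ^ 2 := Finset.sum_le_sum fun ν _ => inner ν
      _ = 4 * ∑ ν ∈ range M, a ν ^ 2 := by rw [Finset.mul_sum]
      _ ≤ 4 * B := by linarith [hB M]
  calc ∑ m ∈ range M, a m * (∑ ν ∈ range (m+1), a ν) / ((m:ℝ)+1)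
      = ∑ m ∈ range M, ∑ ν ∈ range (m+1), a m * a ν / ((m:ℝ)+1) := step1
    _ ≤ ∑ m ∈ range M, ∑ ν ∈ range (m+1),
          (1/2) * (a m ^ 2 / (Real.sqrt (ν+1) * Real.sqrt (m+1))
            + a ν ^ 2 * Real.sqrt (ν+1) / Real.sqrt (m+1) ^ 3) :=
        Finset.sum_le_sum fun m _ => Finset.sum_le_sum fun ν _ => termwise a m ν
    _ = (1/2) * ((∑ m ∈ range M, ∑ ν ∈ range (m+1),
            a m ^ 2 / (Real.sqrt (ν+1) * Real.sqrt (m+1)))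
          + ∑ m ∈ range M, ∑ ν ∈ range (m+1),
            a ν ^ 2 * Real.sqrt (ν+1) / Real.sqrt (m+1) ^ 3) := by
        simp only [Finset.mul_sum, mul_add, Finset.sum_add_distrib]
    _ ≤ (1/2) * (2 * B + 4 * B) := by
        have := hP; have := hQ; nlinarith
    _ = 3 * B := by ring

end TemlyakovAux

/-- Temlyakov's condition (T): for every nonnegative square-summable sequence `a`,
`liminf (a m / t m) * ∑_{ν=0}^m a ν = 0`, computed in `ℝ≥0∞` so that the quotient
is `+∞` when `t m = 0` and `a m > 0`. -/
def CondT (t : ℕ → ℝ) : Prop :=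
  ∀ a : ℕ → ℝ, (∀ ν, 0 ≤ a ν) → Summable (fun ν => a ν ^ 2) →
    Filter.atTop.liminf
      (fun m => ENNReal.ofReal (a m) / ENNReal.ofReal (t m) *
        ENNReal.ofReal (∑ ν ∈ Finset.range (m + 1), a ν)) = 0

theorem stmt_2 (t : ℕ → ℝ) (ht : ∀ m, t m ∈ Set.Icc (0 : ℝ) 1)
    (hdiv : ¬ Summable (fun m => t m / (m + 1 : ℝ))) :
    CondT t := by
  intro a ha hsum
  by_contra hL
  set f : ℕ → ENNReal := fun m => ENNReal.ofReal (a m) / ENNReal.ofReal (t m) *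
      ENNReal.ofReal (∑ ν ∈ Finset.range (m + 1), a ν) with hf
  have hLpos : 0 < atTop.liminf f := pos_iff_ne_zero.2 hL
  set c : ENNReal := min (atTop.liminf f) 1 / 2 with hcdef
  have hmin0 : min (atTop.liminf f) 1 ≠ 0 := (lt_min hLpos zero_lt_one).ne'
  have hmintop : min (atTop.liminf f) 1 ≠ ⊤ :=
    ((min_le_right _ _).trans_lt ENNReal.one_lt_top).ne
  have hc0 : c ≠ 0 := (ENNReal.half_pos hmin0).ne'
  have hctop : c ≠ ⊤ := by
    refine ne_top_of_le_ne_top hmintop ?_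
    exact ENNReal.half_le_self
  have hcL : c < atTop.liminf f :=
    (ENNReal.half_lt_self hmin0 hmintop).trans_le (min_le_left _ _)
  have hev : ∀ᶠ m in atTop, c < f m := eventually_lt_of_lt_liminf hcL
  obtain ⟨N, hN⟩ := eventually_atTop.1 hev
  set c' := c.toReal with hc'def
  have hc'pos : 0 < c' := ENNReal.toReal_pos hc0 hctop
  have hS : ∀ m, 0 ≤ ∑ ν ∈ Finset.range (m+1), a ν :=
    fun m => Finset.sum_nonneg fun ν _ => ha ν
  have hkey : ∀ m, N ≤ m → c' * t m ≤ a m * (∑ ν ∈ Finset.range (m+1), a ν) := by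
    intro m hm
    have h := hN m hm
    rcases eq_or_lt_of_le (ht m).1 with h0 | htpos
    · rw [← h0, mul_zero]
      exact mul_nonneg (ha m) (hS m)
    · have heq : f m = ENNReal.ofReal (a m / t m * ∑ ν ∈ Finset.range (m+1), a ν) := by
        rw [hf]
        simp only
        rw [← ENNReal.ofReal_div_of_pos htpos,
          ← ENNReal.ofReal_mul (div_nonneg (ha m) htpos.le)]
      rw [heq] at h
      have h2 : c' < a m / t m * ∑ ν ∈ Finset.range (m+1), a ν :=
        (ENNReal.lt_ofReal_iff_toReal_lt hctop).1 h
      have h3 : c' * t m ≤ (a m / t m * ∑ ν ∈ Finset.range (m+1), a ν) * t m :=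
        mul_le_mul_of_nonneg_right h2.le htpos.le
      calc c' * t m ≤ (a m / t m * ∑ ν ∈ Finset.range (m+1), a ν) * t m := h3
        _ = a m * (∑ ν ∈ Finset.range (m+1), a ν) := by
            field_simp
  set B := ∑' ν, a ν ^ 2 with hBdef
  have hB : ∀ K, ∑ ν ∈ Finset.range K, a ν ^ 2 ≤ B :=
    fun K => Summable.sum_le_tsum (Finset.range K) (fun i _ => sq_nonneg _) hsum
  apply hdiv
  apply summable_of_sum_range_le (c := (N : ℝ) + 3 * B / c')
    (fun m => div_nonneg (ht m).1 (by positivity))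
  intro n
  have hterm : ∀ m : ℕ, t m / ((m:ℝ) + 1) ≤
      (if m < N then (1:ℝ) else 0) +
        (a m * (∑ ν ∈ Finset.range (m+1), a ν) / ((m:ℝ)+1)) / c' := by
    intro m
    have hden : (0:ℝ) < (m:ℝ) + 1 := by positivity
    have hnn : 0 ≤ (a m * (∑ ν ∈ Finset.range (m+1), a ν) / ((m:ℝ)+1)) / c' := by
      have := mul_nonneg (ha m) (hS m)
      positivity
    by_cases hm : m < N
    · rw [if_pos hm]
      have h1 : t m / ((m:ℝ) + 1) ≤ 1 := by
        rw [div_le_one hden]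
        have h2 := (ht m).2
        have h3 : (0:ℝ) ≤ (m:ℝ) := Nat.cast_nonneg m
        linarith
      linarith
    · rw [if_neg hm]
      push_neg at hm
      have hk := hkey m hm
      rw [zero_add, div_le_div_iff₀ hden hc'pos] at *
      · calc t m * c' = c' * t m := by ring
          _ ≤ a m * (∑ ν ∈ Finset.range (m+1), a ν) := hk
          _ = a m * (∑ ν ∈ Finset.range (m+1), a ν) / ((m:ℝ)+1) * ((m:ℝ)+1) := by
              field_simp
      all_goals try exact hden
  calc ∑ m ∈ Finset.range n, t m / ((m:ℝ) + 1)
      ≤ ∑ m ∈ Finset.range n, ((if m < N then (1:ℝ) else 0) +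
          (a m * (∑ ν ∈ Finset.range (m+1), a ν) / ((m:ℝ)+1)) / c') :=
        Finset.sum_le_sum fun m _ => hterm m
    _ = (∑ m ∈ Finset.range n, if m < N then (1:ℝ) else 0) +
          (∑ m ∈ Finset.range n, a m * (∑ ν ∈ Finset.range (m+1), a ν) / ((m:ℝ)+1)) / c' := by
        rw [Finset.sum_add_distrib, Finset.sum_div]
    _ ≤ (N : ℝ) + 3 * B / c' := by
        have h1 : (∑ m ∈ Finset.range n, if m < N then (1:ℝ) else 0) ≤ (N : ℝ) := by
          rw [Finset.sum_boole]
          have hsub : (Finset.range n).filter (· < N) ⊆ Finset.range N := by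
            intro x hx
            simp only [Finset.mem_filter, Finset.mem_range] at hx ⊢
            exact hx.2
          have := Finset.card_le_card hsub
          rw [Finset.card_range] at this
          exact_mod_cast this
        have h2 : (∑ m ∈ Finset.range n, a m * (∑ ν ∈ Finset.range (m+1), a ν) / ((m:ℝ)+1)) / c'
            ≤ 3 * B / c' := by
          gcongr
          exact hardy a ha B hB n
        linarith
end

section
/- There exists a sequence {t_m} ⊂ [0,1] with ∑ t_m² = ∞ that does not satisfy condition (T). -/
open Filter

/-!
Take `t m = (m+1)^(-1/2)`, so `∑ t m ^ 2` is the harmonic series, and test condition (T)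
against `a m = (m+1)^(-3/4)`, which is square-summable. Since `a` is decreasing,
`∑_{ν ≤ m} a ν ≥ (m+1) a m`, hence `(a m / t m) ∑_{ν ≤ m} a ν ≥ (m+1)^(-1/4 + 1/4) = 1`
for every `m`, and the liminf is at least `1`.
-/

theorem summable_nat_add_one_rpow_sq_iff {p : ℝ} :
    Summable (fun m : ℕ => (((m : ℝ) + 1) ^ p) ^ 2) ↔ p < -(1 / 2) := by
  have hsq : ∀ m : ℕ, (((m : ℝ) + 1) ^ p) ^ 2 = ((m + 1 : ℕ) : ℝ) ^ (p * 2) := fun m => by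
    rw [Nat.cast_succ, ← Real.rpow_mul_natCast (by positivity)]
    norm_num
  simp_rw [hsq]
  rw [summable_nat_add_iff 1 (f := fun n : ℕ => (n : ℝ) ^ (p * 2)), Real.summable_nat_rpow]
  constructor <;> intro <;> linarith

theorem succ_mul_le_sum_range_of_antitone {a : ℕ → ℝ} (ha : Antitone a) (m : ℕ) :
    ((m : ℝ) + 1) * a m ≤ ∑ ν ∈ Finset.range (m + 1), a ν := by
  have h := Finset.card_nsmul_le_sum (Finset.range (m + 1)) a (a m)
    fun ν hν => ha (Nat.lt_succ_iff.mp (Finset.mem_range.mp hν))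
  simpa [nsmul_eq_mul] using h

theorem not_condT_of_one_le {t a : ℕ → ℝ} (ht : ∀ m, 0 < t m) (ha : ∀ ν, 0 ≤ a ν)
    (ha_sq : Summable (fun ν => a ν ^ 2))
    (h_one : ∀ m, 1 ≤ a m / t m * ∑ ν ∈ Finset.range (m + 1), a ν) :
    ¬ CondT t := by
  intro hT
  have h_le : ∀ m, (1 : ENNReal) ≤ ENNReal.ofReal (a m) / ENNReal.ofReal (t m) *
      ENNReal.ofReal (∑ ν ∈ Finset.range (m + 1), a ν) := fun m => by
    rw [← ENNReal.ofReal_div_of_pos (ht m), ← ENNReal.ofReal_mul (div_nonneg (ha m) (ht m).le)]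
    exact ENNReal.one_le_ofReal.mpr (h_one m)
  have h_liminf := Filter.le_liminf_of_le (f := atTop) (by isBoundedDefault)
    (Eventually.of_forall h_le)
  rw [hT a ha ha_sq] at h_liminf
  exact absurd h_liminf (by norm_num)

theorem stmt_4 :
    ∃ t : ℕ → ℝ, (∀ m, t m ∈ Set.Icc (0 : ℝ) 1) ∧
      ¬ Summable (fun m => t m ^ 2) ∧ ¬ CondT t := by
  set t : ℕ → ℝ := fun m => ((m : ℝ) + 1) ^ (-(1 / 2) : ℝ)
  set a : ℕ → ℝ := fun m => ((m : ℝ) + 1) ^ (-(3 / 4) : ℝ)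
  have hpos : ∀ m : ℕ, (0 : ℝ) < (m : ℝ) + 1 := fun m => by positivity
  have ht_pos : ∀ m, 0 < t m := fun m => Real.rpow_pos_of_pos (hpos m) _
  have ha_pos : ∀ m, 0 < a m := fun m => Real.rpow_pos_of_pos (hpos m) _
  have ha_anti : Antitone a := fun μ ν hμν =>
    Real.rpow_le_rpow_of_nonpos (hpos μ) (by gcongr) (by norm_num)
  have h_one : ∀ m, a m / t m * (((m : ℝ) + 1) * a m) = 1 := fun m => calc
    _ = ((m : ℝ) + 1) ^ (-(3 / 4) - -(1 / 2) + (1 + -(3 / 4)) : ℝ) := by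
      rw [Real.rpow_add (hpos m), Real.rpow_sub (hpos m), Real.rpow_add (hpos m), Real.rpow_one]
    _ = 1 := by norm_num
  refine ⟨t, fun m => ⟨(ht_pos m).le,
    Real.rpow_le_one_of_one_le_of_nonpos (by simp) (by norm_num)⟩, ?_, ?_⟩
  · rw [summable_nat_add_one_rpow_sq_iff]
    exact lt_irrefl _
  · refine not_condT_of_one_le ht_pos (fun ν => (ha_pos ν).le)
      ((summable_nat_add_one_rpow_sq_iff (p := -(3 / 4))).mpr (by norm_num)) fun m => ?_
    calc 1 = a m / t m * (((m : ℝ) + 1) * a m) := (h_one m).symm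
      _ ≤ _ := mul_le_mul_of_nonneg_left (succ_mul_le_sum_range_of_antitone ha_anti m)
          (div_nonneg (ha_pos m).le (ht_pos m).le)
end

section
/- Let C be a closed convex subset of a Banach space X containing the origin. If 0 is a weak internal point of C (for every x ∈ C there exists δ(x) > 0 with −δ(x)x ∈ C), then C is quasi-symmetric: for every r > 0 there exists θ = θ(r) ∈ (0,1] such that x ∈ C with |x| ≤ r implies −θx ∈ C. -/
theorem stmt_5 {X : Type*} [NormedAddCommGroup X] [NormedSpace ℝ X] [CompleteSpace X]
    (C : Set X) (hclosed : IsClosed C) (hconv : Convex ℝ C) (h0 : (0 : X) ∈ C)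
    (hwip : ∀ x ∈ C, ∃ δ : ℝ, 0 < δ ∧ -(δ • x) ∈ C) :
    ∀ r : ℝ, 0 < r → ∃ θ : ℝ, θ ∈ Set.Ioc (0 : ℝ) 1 ∧
      ∀ x ∈ C, ‖x‖ ≤ r → -(θ • x) ∈ C := by
  intro r hr
  -- K is the intersection of C with the closed ball of radius r
  set K : Set X := C ∩ Metric.closedBall (0 : X) r with hKdef
  have hKclosed : IsClosed K := hclosed.inter Metric.isClosed_closedBall
  have h0K : (0 : X) ∈ K := ⟨h0, Metric.mem_closedBall_self hr.le⟩
  haveI : Nonempty K := ⟨⟨0, h0K⟩⟩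
  haveI : CompleteSpace K := hKclosed.completeSpace_coe
  -- the closed pieces
  set f : ℕ → Set K := fun n => {x : K | -((1 / (n + 1 : ℝ)) • (x : X)) ∈ C} with hfdef
  have hfc : ∀ n, IsClosed (f n) := by
    intro n
    have hcont : Continuous fun x : K => -((1 / (n + 1 : ℝ)) • (x : X)) := by
      exact (continuous_subtype_val.const_smul _).neg
    exact hclosed.preimage hcont
  have hfU : ⋃ n, f n = Set.univ := by
    ext x
    simp only [Set.mem_iUnion, Set.mem_univ, iff_true]
    obtain ⟨δ, hδ, hδmem⟩ := hwip (x : X) x.2.1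
    obtain ⟨n, hn⟩ := exists_nat_one_div_lt hδ
    refine ⟨n, ?_⟩
    have hn1 : (0 : ℝ) < 1 / (n + 1 : ℝ) := by positivity
    set t : ℝ := (1 / (n + 1 : ℝ)) / δ with htdef
    have ht0 : 0 < t := by positivity
    have ht1 : t ≤ 1 := by
      rw [htdef, div_le_one hδ]; exact hn.le
    have := hconv hδmem h0 ht0.le (by linarith : (0:ℝ) ≤ 1 - t) (by ring)
    simp only [smul_zero, add_zero, smul_neg, smul_smul] at this
    have htδ : t * δ = 1 / (n + 1 : ℝ) := by
      rw [htdef]; field_simp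
    rwa [htδ] at this
  -- Baire category
  obtain ⟨n, x₀, hx₀⟩ := nonempty_interior_of_iUnion_of_closed hfc hfU
  obtain ⟨ε, hε, hball⟩ := Metric.mem_nhds_iff.1 (mem_interior_iff_mem_nhds.1 hx₀)
  set m : ℝ := 1 / (n + 1 : ℝ) with hmdef
  have hm0 : 0 < m := by positivity
  have hm1 : m ≤ 1 := by
    rw [hmdef, div_le_one (by positivity)]
    have : (0:ℝ) ≤ (n : ℝ) := Nat.cast_nonneg n
    linarith
  set s : ℝ := min (ε / (2 * r + 1)) 1 with hsdef
  have hs0 : 0 < s := lt_min (by positivity) one_pos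
  have hs1 : s ≤ 1 := min_le_right _ _
  set d : ℝ := 1 + m * (1 - s) with hddef
  have hd1 : 1 ≤ d := by nlinarith
  have hd0 : 0 < d := by linarith
  refine ⟨m * s / d, ⟨by positivity, ?_⟩, ?_⟩
  · rw [div_le_one hd0]; nlinarith
  · intro x hxC hxr
    -- z is on the segment from x₀ to x, close to x₀
    have hx₀C : (x₀ : X) ∈ C := x₀.2.1
    have hx₀r : ‖(x₀ : X)‖ ≤ r := mem_closedBall_zero_iff.1 x₀.2.2
    set z : X := (1 - s) • (x₀ : X) + s • x with hzdef
    have hzC : z ∈ C := hconv hx₀C hxC (by linarith) hs0.le (by ring)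
    have hzr : ‖z‖ ≤ r := by
      calc ‖z‖ ≤ ‖(1 - s) • (x₀ : X)‖ + ‖s • x‖ := norm_add_le _ _
        _ = (1 - s) * ‖(x₀ : X)‖ + s * ‖x‖ := by
            rw [norm_smul, norm_smul, Real.norm_eq_abs, Real.norm_eq_abs,
              abs_of_nonneg (by linarith : (0:ℝ) ≤ 1 - s), abs_of_nonneg hs0.le]
        _ ≤ (1 - s) * r + s * r := by
            gcongr <;> linarith
        _ = r := by ring
    have hzK : z ∈ K := ⟨hzC, mem_closedBall_zero_iff.2 hzr⟩
    have hdist : dist (⟨z, hzK⟩ : K) x₀ < ε := by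
      rw [Subtype.dist_eq, dist_eq_norm]
      have hzx : z - (x₀ : X) = s • (x - (x₀ : X)) := by
        rw [hzdef]; module
      rw [hzx, norm_smul, Real.norm_eq_abs, abs_of_nonneg hs0.le]
      have h1 : ‖x - (x₀ : X)‖ ≤ 2 * r := by
        calc ‖x - (x₀ : X)‖ ≤ ‖x‖ + ‖(x₀ : X)‖ := norm_sub_le _ _
          _ ≤ 2 * r := by linarith
      have h2 : s ≤ ε / (2 * r + 1) := min_le_left _ _
      calc s * ‖x - (x₀ : X)‖ ≤ (ε / (2 * r + 1)) * (2 * r) := by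
            apply mul_le_mul h2 h1 (norm_nonneg _) (by positivity)
        _ < ε := by
            rw [div_mul_eq_mul_div, div_lt_iff₀ (by positivity)]
            nlinarith
    have hzmem : -(m • z) ∈ C := hball hdist
    -- combine -(m • z) with x₀
    have key := hconv hzmem hx₀C (a := 1 / d) (b := 1 - 1 / d)
      (by positivity) (by rw [sub_nonneg, div_le_one hd0]; exact hd1) (by ring)
    have heq : (1 / d) • (-(m • z)) + (1 - 1 / d) • (x₀ : X) = -((m * s / d) • x) := by
      rw [hzdef]
      have hdne : d ≠ 0 := ne_of_gt hd0
      match_scalars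
      · field_simp
        rw [hddef]; ring
      · field_simp
    rwa [heq] at key
end

section
/- In the Euclidean plane ℝ², let C₁ = {(s,t) : s = 0} and C₂ = {(s,t) : s − 2 ≤ t ≤ s + 2}, both closed, convex and symmetric about the origin, with intersection C = {0} × [−2,2]. Starting from x₀ = (−4,4), the remotest projection algorithm (always projecting onto a set at maximal distance) gives x₁ = P_{C₂}x₀ = (−1,1) and x₂ = P_{C₁}x₁ = (0,1) ∈ C, while the projection of x₀ onto C equals (0,2). Hence the limit of remotest projections need not equal P_C x₀. -/
noncomputable section

/-- The plane ℝ² with the Euclidean norm. -/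
abbrev Plane : Type := EuclideanSpace ℝ (Fin 2)

/-- A point of the Euclidean plane with given coordinates. -/
def pt (s t : ℝ) : Plane := (WithLp.equiv 2 (Fin 2 → ℝ)).symm ![s, t]

def C₁ : Set Plane := {p | p 0 = 0}

def C₂ : Set Plane := {p | p 0 - 2 ≤ p 1 ∧ p 1 ≤ p 0 + 2}

/-! Every nearest point claimed below is certified by the obtuse-angle criterion
`⟪x - u, y - u⟫ ≤ 0` for all `y` in the set, which for these polyhedral sets is a linear
inequality in the coordinates of `y`. The distances to `C₁` and `C₂` are then read off at the
nearest points `(0,4)` and `(-1,1)`. -/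

open RealInnerProductSpace

def IsMetricProjection {α : Type*} [PseudoMetricSpace α] (s : Set α) (x u : α) : Prop :=
  u ∈ s ∧ ∀ y ∈ s, dist x u ≤ dist x y

theorem IsMetricProjection.infDist_eq {α : Type*} [PseudoMetricSpace α] {s : Set α} {x u : α}
    (h : IsMetricProjection s x u) : Metric.infDist x s = dist x u :=
  le_antisymm (Metric.infDist_le_dist_of_mem h.1) ((Metric.le_infDist ⟨u, h.1⟩).2 h.2)

theorem dist_le_dist_of_inner_sub_nonpos {E : Type*} [NormedAddCommGroup E]
    [InnerProductSpace ℝ E] {x u y : E} (h : ⟪x - u, y - u⟫ ≤ 0) : dist x u ≤ dist x y := by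
  have key : ‖x - y‖ ^ 2 = ‖x - u‖ ^ 2 - 2 * ⟪x - u, y - u⟫ + ‖y - u‖ ^ 2 := by
    rw [← norm_sub_sq_real, sub_sub_sub_cancel_right]
  rw [dist_eq_norm, dist_eq_norm]
  refine (pow_le_pow_iff_left₀ (norm_nonneg _) (norm_nonneg _) two_ne_zero).1 ?_
  nlinarith [sq_nonneg ‖y - u‖]

theorem isMetricProjection_of_inner_sub_nonpos {E : Type*} [NormedAddCommGroup E]
    [InnerProductSpace ℝ E] {s : Set E} {x u : E} (hu : u ∈ s)
    (h : ∀ y ∈ s, ⟪x - u, y - u⟫ ≤ 0) : IsMetricProjection s x u :=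
  ⟨hu, fun y hy => dist_le_dist_of_inner_sub_nonpos (h y hy)⟩

@[simp] lemma pt_apply_zero (s t : ℝ) : pt s t 0 = s := rfl

@[simp] lemma pt_apply_one (s t : ℝ) : pt s t 1 = t := rfl

lemma Plane.inner_eq (p q : Plane) : ⟪p, q⟫ = p 0 * q 0 + p 1 * q 1 := by
  simp [PiLp.inner_apply, Fin.sum_univ_two, mul_comm]

lemma dist_pt_pt (a b c d : ℝ) : dist (pt a b) (pt c d) = √((a - c) ^ 2 + (b - d) ^ 2) := by
  simp [EuclideanSpace.dist_eq, Fin.sum_univ_two, Real.dist_eq, sq_abs]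

lemma isClosed_C₁ : IsClosed C₁ := isClosed_eq (EuclideanSpace.proj 0).continuous continuous_const

lemma isClosed_C₂ : IsClosed C₂ := by
  have h₀ : Continuous fun p : Plane => p 0 := (EuclideanSpace.proj 0).continuous
  have h₁ : Continuous fun p : Plane => p 1 := (EuclideanSpace.proj 1).continuous
  exact (isClosed_le (h₀.sub continuous_const) h₁).inter (isClosed_le h₁ (h₀.add continuous_const))

lemma convex_C₁ : Convex ℝ C₁ := by
  rintro p (hp : p 0 = 0) q (hq : q 0 = 0) a b - - -
  simp [C₁, hp, hq]

lemma convex_C₂ : Convex ℝ C₂ := by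
  rintro p ⟨hp₁, hp₂⟩ q ⟨hq₁, hq₂⟩ a b ha hb hab
  simp only [C₂, Set.mem_ofPred_eq, PiLp.add_apply, PiLp.smul_apply, smul_eq_mul]
  constructor <;> nlinarith

lemma neg_mem_C₁ {p : Plane} (hp : p ∈ C₁) : -p ∈ C₁ := by
  simpa [C₁] using hp

lemma neg_mem_C₂ {p : Plane} (hp : p ∈ C₂) : -p ∈ C₂ := by
  obtain ⟨h₁, h₂⟩ := hp
  simp only [C₂, Set.mem_ofPred_eq, PiLp.neg_apply]
  constructor <;> linarith

lemma C₁_inter_C₂ : C₁ ∩ C₂ = {p : Plane | p 0 = 0 ∧ p 1 ∈ Set.Icc (-2 : ℝ) 2} := by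
  ext p
  simp only [C₁, C₂, Set.mem_inter_iff, Set.mem_ofPred_eq, Set.mem_Icc]
  constructor
  · rintro ⟨h₀, h₁, h₂⟩
    exact ⟨h₀, by linarith, by linarith⟩
  · rintro ⟨h₀, h₁, h₂⟩
    exact ⟨h₀, by linarith, by linarith⟩

theorem stmt_7 :
    IsClosed C₁ ∧ Convex ℝ C₁ ∧ (∀ p ∈ C₁, -p ∈ C₁) ∧
    IsClosed C₂ ∧ Convex ℝ C₂ ∧ (∀ p ∈ C₂, -p ∈ C₂) ∧
    C₁ ∩ C₂ = {p : Plane | p 0 = 0 ∧ p 1 ∈ Set.Icc (-2 : ℝ) 2} ∧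
    Metric.infDist (pt (-4) 4) C₂ = 3 * Real.sqrt 2 ∧
    Metric.infDist (pt (-4) 4) C₁ = 4 ∧
    Metric.infDist (pt (-4) 4) C₂ > Metric.infDist (pt (-4) 4) C₁ ∧
    (pt (-1) 1 ∈ C₂ ∧ ∀ y ∈ C₂, dist (pt (-4) 4) (pt (-1) 1) ≤ dist (pt (-4) 4) y) ∧
    (pt 0 1 ∈ C₁ ∧ ∀ y ∈ C₁, dist (pt (-1) 1) (pt 0 1) ≤ dist (pt (-1) 1) y) ∧
    pt 0 1 ∈ C₁ ∩ C₂ ∧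
    (pt 0 2 ∈ C₁ ∩ C₂ ∧ ∀ y ∈ C₁ ∩ C₂, dist (pt (-4) 4) (pt 0 2) ≤ dist (pt (-4) 4) y) ∧
    pt 0 1 ≠ pt 0 2 := by
  have proj_x₀_C₂ : IsMetricProjection C₂ (pt (-4) 4) (pt (-1) 1) :=
    isMetricProjection_of_inner_sub_nonpos (by norm_num [C₂]) fun y ⟨_, hy⟩ => by
      simp only [Plane.inner_eq, PiLp.sub_apply, pt_apply_zero, pt_apply_one]; linarith
  have proj_x₀_C₁ : IsMetricProjection C₁ (pt (-4) 4) (pt 0 4) :=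
    isMetricProjection_of_inner_sub_nonpos rfl fun y (hy : y 0 = 0) => by
      simp [Plane.inner_eq, hy]
  have proj_x₁_C₁ : IsMetricProjection C₁ (pt (-1) 1) (pt 0 1) :=
    isMetricProjection_of_inner_sub_nonpos rfl fun y (hy : y 0 = 0) => by
      simp [Plane.inner_eq, hy]
  have proj_x₀_C : IsMetricProjection (C₁ ∩ C₂) (pt (-4) 4) (pt 0 2) :=
    isMetricProjection_of_inner_sub_nonpos (by norm_num [C₁, C₂])
      fun y ⟨(hy₀ : y 0 = 0), _, hy⟩ => by
      simp only [Plane.inner_eq, PiLp.sub_apply, pt_apply_zero, pt_apply_one, hy₀] at hy ⊢; linarith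
  have dist₂ : Metric.infDist (pt (-4) 4) C₂ = 3 * √2 := by
    rw [proj_x₀_C₂.infDist_eq, dist_pt_pt,
      show (-4 - -1 : ℝ) ^ 2 + (4 - 1) ^ 2 = 3 ^ 2 * 2 by norm_num, Real.sqrt_mul (by norm_num), Real.sqrt_sq (by norm_num)]
  have dist₁ : Metric.infDist (pt (-4) 4) C₁ = 4 := by
    rw [proj_x₀_C₁.infDist_eq, dist_pt_pt]; norm_num
  refine ⟨isClosed_C₁, convex_C₁, fun _ => neg_mem_C₁, isClosed_C₂, convex_C₂,
    fun _ => neg_mem_C₂, C₁_inter_C₂, dist₂, dist₁, ?_, proj_x₀_C₂, proj_x₁_C₁, by norm_num [C₁, C₂], proj_x₀_C, ?_⟩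
  · rw [dist₂, dist₁, gt_iff_lt, ← div_lt_iff₀' three_pos, Real.lt_sqrt (by norm_num)]
    norm_num
  · intro h
    simpa using congrArg (· 1) h

end
end

section
/- Let H be a real Hilbert space and let each set C_α of a family of closed convex sets contain a fixed ball B(a,r) with r > 0. Let {x_n} be a sequence of consecutive metric projections onto sets of the family starting at x₀. Then ∑_{n} |x_n − x_{n+1}| < ∞, and in particular {x_n} converges in norm. -/
open Filter RealInnerProductSpace

theorem stmt_8 {H : Type*} [NormedAddCommGroup H] [InnerProductSpace ℝ H]
    [CompleteSpace H]
    {Ω : Type*} (C : Ω → Set H)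
    (hclosed : ∀ α, IsClosed (C α)) (hconv : ∀ α, Convex ℝ (C α))
    (a : H) (r : ℝ) (hr : 0 < r) (hball : ∀ α, Metric.closedBall a r ⊆ C α)
    (P : Ω → H → H)
    (hPmem : ∀ α x, P α x ∈ C α)
    (hPnear : ∀ α x, ∀ y ∈ C α, ‖x - P α x‖ ≤ ‖x - y‖)
    (α : ℕ → Ω) (x : ℕ → H)
    (hrec : ∀ n, x (n + 1) = P (α n) (x n)) :
    Summable (fun n => ‖x n - x (n + 1)‖) ∧
    ∃ w : H, Tendsto x atTop (nhds w) := by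
  -- variational inequality for each projection
  have hvar : ∀ n, ∀ y ∈ C (α n),
      ⟪x n - x (n + 1), y - x (n + 1)⟫ ≤ 0 := by
    intro n y hy
    have hp : x (n + 1) ∈ C (α n) := by rw [hrec]; exact hPmem _ _
    have hinf : ‖x n - x (n + 1)‖ = ⨅ w : C (α n), ‖x n - w‖ := by
      haveI : Nonempty (C (α n)) := ⟨⟨_, hp⟩⟩
      refine le_antisymm (le_ciInf fun w => ?_) ?_
      · rw [hrec]; exact hPnear _ _ _ w.2
      · exact ciInf_le ⟨0, fun _ ⟨_, h⟩ => h ▸ norm_nonneg _⟩ (⟨_, hp⟩ : C (α n))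
    exact (norm_eq_iInf_iff_real_inner_le_zero (hconv _) hp).mp hinf y hy
  -- key inequality
  have key : ∀ n, ‖x n - x (n + 1)‖ ≤
      (‖x n - a‖ ^ 2 - ‖x (n + 1) - a‖ ^ 2) / (2 * r) := by
    intro n
    set u := x n
    set p := x (n + 1)
    have h2 : 2 * ⟪u - p, p - a⟫ = ‖u - a‖ ^ 2 - ‖p - a‖ ^ 2 - ‖u - p‖ ^ 2 := by
      have : u - a = (u - p) + (p - a) := by abel
      rw [this, ← real_inner_self_eq_norm_sq, ← real_inner_self_eq_norm_sq,
        ← real_inner_self_eq_norm_sq, inner_add_add_self,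
        real_inner_comm (p - a) (u - p)]
      ring
    rcases eq_or_ne u p with h | h
    · rw [h]
      simp only [sub_self, norm_zero, sub_self]
      positivity
    · have hup : 0 < ‖u - p‖ := by
        rw [norm_pos_iff]; exact sub_ne_zero_of_ne h
      set v : H := (‖u - p‖)⁻¹ • (u - p) with hv
      have hvnorm : ‖v‖ = 1 := by
        rw [hv, norm_smul, norm_inv, norm_norm, inv_mul_cancel₀ hup.ne']
      have hy : a + r • v ∈ C (α n) := by
        apply hball
        simp [Metric.mem_closedBall, dist_eq_norm, norm_smul, hvnorm,
          abs_of_pos hr, hr.le]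
      have := hvar n _ hy
      have hinner : ⟪u - p, a + r • v - p⟫
          = ⟪u - p, a - p⟫ + r * ‖u - p‖ := by
        have : a + r • v - p = (a - p) + r • v := by abel
        rw [this, inner_add_right, real_inner_smul_right, hv,
          real_inner_smul_right, real_inner_self_eq_norm_sq]
        field_simp
      rw [hinner] at this
      have h3 : r * ‖u - p‖ ≤ ⟪u - p, p - a⟫ := by
        have : ⟪u - p, p - a⟫ = - ⟪u - p, a - p⟫ := by
          rw [← inner_neg_right]; congr 1; abel
        linarith
      have h4 : 2 * r * ‖u - p‖ ≤ ‖u - a‖ ^ 2 - ‖p - a‖ ^ 2 := by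
        nlinarith [sq_nonneg ‖u - p‖]
      rw [le_div_iff₀ (by positivity)]
      linarith
  have hmono : ∀ n, ‖x (n + 1) - a‖ ^ 2 ≤ ‖x n - a‖ ^ 2 := by
    intro n
    have := key n
    have h0 := norm_nonneg (x n - x (n + 1))
    have h5 : (0:ℝ) ≤ (‖x n - a‖ ^ 2 - ‖x (n + 1) - a‖ ^ 2) / (2 * r) :=
      le_trans h0 this
    have h6 := (le_div_iff₀ (by positivity : (0:ℝ) < 2 * r)).mp h5
    linarith
  -- summability via bounded partial sums
  have hsum : Summable (fun n => ‖x n - x (n + 1)‖) := by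
    apply summable_of_sum_range_le (fun n => norm_nonneg _)
    intro n
    calc ∑ i ∈ Finset.range n, ‖x i - x (i + 1)‖
        ≤ ∑ i ∈ Finset.range n,
            (‖x i - a‖ ^ 2 - ‖x (i + 1) - a‖ ^ 2) / (2 * r) :=
          Finset.sum_le_sum fun i _ => key i
      _ = (‖x 0 - a‖ ^ 2 - ‖x n - a‖ ^ 2) / (2 * r) := by
          rw [← Finset.sum_div, Finset.sum_range_sub' (fun i => ‖x i - a‖ ^ 2)]
      _ ≤ ‖x 0 - a‖ ^ 2 / (2 * r) := by
          apply div_le_div_of_nonneg_right ?_ (by positivity) |>.trans_eq rfl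
          nlinarith [sq_nonneg ‖x n - a‖]
  refine ⟨hsum, ?_⟩
  have hcauchy : CauchySeq x := by
    apply cauchySeq_of_summable_dist
    simpa [dist_eq_norm] using hsum
  exact cauchySeq_tendsto_of_complete hcauchy
end

section
/- Let {C_α} be a family of closed convex subsets of a Hilbert space H with C = ⋂_α C_α ≠ ∅, and suppose each C_α contains the ball B(a,r), r > 0. Let {x_n} be the sequence of remote projections with weakness parameters {t_n} ⊂ [0,1], i.e., x_{n+1} = P_{α(n)}x_n with dist(x_n, C_{α(n)}) ≥ t_n sup_α dist(x_n, C_α). Then for every n, dist(x_{n+1}, C) ≤ dist(x_n, C)·(1 − t_n² r² / |x₀ − a|²)^{1/2}. -/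
open Metric
open scoped RealInnerProductSpace

lemma aux_le_infDist {H : Type*} [MetricSpace H] {s : Set H} (hs : s.Nonempty)
    {x : H} {b : ℝ} (h : ∀ y ∈ s, b ≤ dist x y) : b ≤ infDist x s := by
  by_contra hb
  push_neg at hb
  obtain ⟨y, hy, hlt⟩ := (infDist_lt_iff hs).1 hb
  exact absurd (h y hy) (not_le.2 hlt)

lemma aux_proj_inner {H : Type*} [NormedAddCommGroup H] [InnerProductSpace ℝ H]
    {K : Set H} (hK : Convex ℝ K) {x p : H} (hp : p ∈ K)
    (hnear : ∀ y ∈ K, ‖x - p‖ ≤ ‖x - y‖) :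
    ∀ y ∈ K, ⟪x - p, y - p⟫ ≤ 0 := by
  haveI : Nonempty K := ⟨⟨p, hp⟩⟩
  have hinf : ‖x - p‖ = ⨅ w : K, ‖x - w‖ := by
    refine le_antisymm (le_ciInf fun w => hnear w w.2) ?_
    refine ciInf_le ⟨0, ?_⟩ (⟨p, hp⟩ : K)
    rintro b ⟨w, rfl⟩
    exact norm_nonneg _
  exact (norm_eq_iInf_iff_real_inner_le_zero hK hp).1 hinf

lemma aux_firm {H : Type*} [NormedAddCommGroup H] [InnerProductSpace ℝ H]
    {K : Set H} (hK : Convex ℝ K) {x p : H} (hp : p ∈ K)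
    (hnear : ∀ y ∈ K, ‖x - p‖ ≤ ‖x - y‖) :
    ∀ y ∈ K, ‖p - y‖ ^ 2 + ‖x - p‖ ^ 2 ≤ ‖x - y‖ ^ 2 := by
  intro y hy
  have hi := aux_proj_inner hK hp hnear y hy
  have hxy : x - y = (x - p) - (y - p) := by abel
  have hexp : ‖x - y‖ ^ 2 = ‖x - p‖ ^ 2 - 2 * ⟪x - p, y - p⟫ + ‖y - p‖ ^ 2 := by
    rw [hxy, @norm_sub_sq_real]
  have hnn : ‖p - y‖ = ‖y - p‖ := by rw [norm_sub_rev]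
  rw [hexp, hnn]
  nlinarith [hi]

set_option maxHeartbeats 1000000 in
theorem stmt_9 {H : Type*} [NormedAddCommGroup H] [InnerProductSpace ℝ H]
    [CompleteSpace H]
    {Ω : Type*} [Nonempty Ω] (C : Ω → Set H)
    (hclosed : ∀ α, IsClosed (C α)) (hconv : ∀ α, Convex ℝ (C α))
    (hCne : (⋂ α, C α).Nonempty)
    (a : H) (r : ℝ) (hr : 0 < r) (hball : ∀ α, Metric.closedBall a r ⊆ C α)
    (P : Ω → H → H)
    (hPmem : ∀ α x, P α x ∈ C α)
    (hPnear : ∀ α x, ∀ y ∈ C α, ‖x - P α x‖ ≤ ‖x - y‖)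
    (t : ℕ → ℝ) (ht : ∀ n, t n ∈ Set.Icc (0 : ℝ) 1)
    (α : ℕ → Ω) (x : ℕ → H)
    (hrec : ∀ n, x (n + 1) = P (α n) (x n))
    (hremote : ∀ n, t n * (⨆ β, Metric.infDist (x n) (C β)) ≤
      Metric.infDist (x n) (C (α n)))
    (hx₀a : x 0 ≠ a) (hx₀C : x 0 ∉ ⋂ α, C α) :
    ∀ n, Metric.infDist (x (n + 1)) (⋂ α, C α) ≤
      Metric.infDist (x n) (⋂ α, C α) *
        Real.sqrt (1 - t n ^ 2 * r ^ 2 / ‖x 0 - a‖ ^ 2) := by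
  intro n
  set D := ⋂ β, C β with hD
  have haC : ∀ β, a ∈ C β := fun β => hball β (Metric.mem_closedBall_self hr.le)
  have haD : a ∈ D := Set.mem_iInter.2 haC
  have hDne : D.Nonempty := ⟨a, haD⟩
  have hDsub : ∀ β, D ⊆ C β := fun β => Set.iInter_subset _ β
  have hDclosed : IsClosed D := isClosed_iInter hclosed
  have hDconv : Convex ℝ D := convex_iInter hconv
  set M := ‖x 0 - a‖ with hM
  have hM0 : 0 < M := by
    rw [hM, norm_pos_iff]; exact sub_ne_zero_of_ne hx₀a
  have hrM : r < M := by
    by_contra hle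
    push_neg at hle
    refine hx₀C (Set.mem_iInter.2 fun β => hball β ?_)
    rw [Metric.mem_closedBall, dist_eq_norm]
    exact hle
  have hPdist : ∀ β w, Metric.infDist w (C β) = ‖w - P β w‖ := by
    intro β w
    refine le_antisymm ?_ ?_
    · rw [← dist_eq_norm]; exact Metric.infDist_le_dist_of_mem (hPmem β w)
    · refine aux_le_infDist ⟨a, haC β⟩ ?_
      intro y hy; rw [dist_eq_norm]; exact hPnear β w y hy
  have hxa : ∀ m, ‖x m - a‖ ≤ M := by
    intro m
    induction m with
    | zero => exact le_of_eq rfl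
    | succ k ih =>
      have hf := aux_firm (hconv (α k)) (hPmem (α k) (x k)) (hPnear (α k) (x k)) a (haC (α k))
      rw [← hrec k] at hf
      have h1 : ‖x (k+1) - a‖ ^ 2 ≤ ‖x k - a‖ ^ 2 := by
        linarith [hf, sq_nonneg ‖x k - x (k+1)‖]
      have h2 := Real.sqrt_le_sqrt h1
      rw [Real.sqrt_sq (norm_nonneg _), Real.sqrt_sq (norm_nonneg _)] at h2
      exact h2.trans ih
  have hbdd : ∀ w : H, BddAbove (Set.range fun β => Metric.infDist w (C β)) := by
    intro w
    refine ⟨dist w a, ?_⟩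
    rintro b ⟨β, rfl⟩
    exact Metric.infDist_le_dist_of_mem (haC β)
  have hsup_nonneg : ∀ w : H, 0 ≤ ⨆ β, Metric.infDist w (C β) := fun w =>
    le_trans Metric.infDist_nonneg (le_ciSup (hbdd w) (Classical.arbitrary Ω))
  have hgeom : ∀ w : H, r * Metric.infDist w D ≤ ‖w - a‖ * ⨆ β, Metric.infDist w (C β) := by
    intro w
    set s := ⨆ β, Metric.infDist w (C β) with hs
    have hs0 : 0 ≤ s := hsup_nonneg w
    have hle : ∀ β, Metric.infDist w (C β) ≤ s := fun β => le_ciSup (hbdd w) β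
    rcases eq_or_lt_of_le hs0 with hzero | hpos
    · have hwD : w ∈ D := Set.mem_iInter.2 fun β => by
        have h0 : Metric.infDist w (C β) = 0 :=
          le_antisymm (by rw [hzero]; exact hle β) Metric.infDist_nonneg
        exact ((hclosed β).mem_iff_infDist_zero ⟨a, haC β⟩).2 h0
      rw [Metric.infDist_zero_of_mem hwD, ← hzero]
      simp
    · have hrs : 0 < r + s := by linarith
      set y := (r/(r+s)) • w + (s/(r+s)) • a with hy
      have hyC : ∀ β, y ∈ C β := by
        intro β
        set p := P β w with hp
        have hpw : ‖w - p‖ ≤ s := by rw [← hPdist β w]; exact hle β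
        set q := a + (r / s) • (w - p) with hq
        have hqB : q ∈ Metric.closedBall a r := by
          rw [Metric.mem_closedBall, dist_eq_norm]
          have hqa : q - a = (r/s) • (w - p) := by rw [hq]; abel
          rw [hqa, norm_smul, Real.norm_eq_abs, abs_of_nonneg (by positivity)]
          calc r / s * ‖w - p‖ ≤ r / s * s :=
                mul_le_mul_of_nonneg_left hpw (by positivity)
            _ = r := by field_simp
        have combo := hconv β (hPmem β w) (hball β hqB)
          (by positivity : (0:ℝ) ≤ r/(r+s)) (by positivity : (0:ℝ) ≤ s/(r+s))
          (by field_simp)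
        have hyeq : (r/(r+s)) • p + (s/(r+s)) • q = y := by
          have key : (s/(r+s)) * (r/s) = r/(r+s) := by field_simp
          rw [hq, smul_add, smul_smul, key, hy, smul_sub]
          abel
        rwa [hyeq] at combo
      have hyD : y ∈ D := Set.mem_iInter.2 hyC
      have hdy : Metric.infDist w D ≤ ‖w - y‖ := by
        rw [← dist_eq_norm]; exact Metric.infDist_le_dist_of_mem hyD
      have hwy : w - y = (s/(r+s)) • (w - a) := by
        have hsum : r/(r+s) + s/(r+s) = 1 := by field_simp
        have hw1 : w = (r/(r+s)) • w + (s/(r+s)) • w := by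
          rw [← add_smul, hsum, one_smul]
        rw [hy, smul_sub]
        nth_rewrite 1 [hw1]
        abel
      have hny : ‖w - y‖ = (s/(r+s)) * ‖w - a‖ := by
        rw [hwy, norm_smul, Real.norm_eq_abs, abs_of_nonneg (by positivity)]
      have h1 : Metric.infDist w D ≤ (s/(r+s)) * ‖w - a‖ := by rw [← hny]; exact hdy
      have h2 : r / (r+s) ≤ 1 := by rw [div_le_one hrs]; linarith
      calc r * Metric.infDist w D ≤ r * ((s/(r+s)) * ‖w - a‖) :=
            mul_le_mul_of_nonneg_left h1 hr.le
        _ = (r/(r+s)) * (s * ‖w - a‖) := by ring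
        _ ≤ 1 * (s * ‖w - a‖) :=
            mul_le_mul_of_nonneg_right h2 (by positivity)
        _ = ‖w - a‖ * s := by ring
  -- projection of x n onto D
  obtain ⟨v, hvD, hvinf⟩ :=
    exists_norm_eq_iInf_of_complete_convex hDne hDclosed.isComplete hDconv (x n)
  haveI : Nonempty D := ⟨⟨a, haD⟩⟩
  have hvnear : ∀ y ∈ D, ‖x n - v‖ ≤ ‖x n - y‖ := by
    intro y hy
    rw [hvinf]
    refine ciInf_le ⟨0, ?_⟩ (⟨y, hy⟩ : D)
    rintro b ⟨w, rfl⟩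
    exact norm_nonneg _
  have hdn : Metric.infDist (x n) D = ‖x n - v‖ := by
    refine le_antisymm ?_ (aux_le_infDist hDne fun y hy => by
      rw [dist_eq_norm]; exact hvnear y hy)
    rw [← dist_eq_norm]; exact Metric.infDist_le_dist_of_mem hvD
  have hf := aux_firm (hconv (α n)) (hPmem (α n) (x n)) (hPnear (α n) (x n)) v (hDsub (α n) hvD)
  rw [← hrec n] at hf
  set d := Metric.infDist (x n) D with hd
  set d' := Metric.infDist (x (n+1)) D with hd'
  have hd0 : 0 ≤ d := Metric.infDist_nonneg
  have hd'0 : 0 ≤ d' := Metric.infDist_nonneg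
  have hd'le : d' ≤ ‖x (n+1) - v‖ := by
    rw [hd', ← dist_eq_norm]; exact Metric.infDist_le_dist_of_mem hvD
  set s := ⨆ β, Metric.infDist (x n) (C β) with hs
  have hs0 : 0 ≤ s := hsup_nonneg (x n)
  have hstep : t n * s ≤ ‖x n - x (n+1)‖ := by
    have h := hremote n
    rwa [hPdist (α n) (x n), ← hrec n] at h
  have hgM : r * d ≤ M * s :=
    le_trans (hgeom (x n)) (mul_le_mul_of_nonneg_right (hxa n) hs0)
  have htn := ht n
  have hts : (r / M) * d ≤ s := by
    rw [div_mul_eq_mul_div, div_le_iff₀ hM0]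
    calc r * d ≤ M * s := hgM
      _ = s * M := by ring
  have hkey : t n * ((r/M) * d) ≤ ‖x n - x (n+1)‖ :=
    le_trans (mul_le_mul_of_nonneg_left hts htn.1) hstep
  have hkey0 : 0 ≤ t n * ((r/M) * d) :=
    mul_nonneg htn.1 (mul_nonneg (by positivity) hd0)
  have hsqkey : (t n * ((r/M) * d)) ^ 2 ≤ ‖x n - x (n+1)‖ ^ 2 :=
    pow_le_pow_left₀ hkey0 hkey 2
  have hexpand : (t n * ((r/M) * d)) ^ 2 = d ^ 2 * (t n ^ 2 * r ^ 2 / M ^ 2) := by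
    field_simp
  have hsq : d' ^ 2 ≤ d ^ 2 * (1 - t n ^ 2 * r ^ 2 / M ^ 2) := by
    have h2 : d' ^ 2 ≤ ‖x (n+1) - v‖ ^ 2 := pow_le_pow_left₀ hd'0 hd'le 2
    have h3 : ‖x n - v‖ ^ 2 = d ^ 2 := by rw [hdn]
    rw [mul_sub, mul_one]
    linarith [hf, hsqkey, hexpand, h2, h3]
  have hc : 0 ≤ 1 - t n ^ 2 * r ^ 2 / M ^ 2 := by
    have ht2 : t n ^ 2 ≤ 1 := by nlinarith [htn.1, htn.2]
    have hr2 : r ^ 2 ≤ M ^ 2 := pow_le_pow_left₀ hr.le hrM.le 2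
    have h4 : t n ^ 2 * r ^ 2 ≤ M ^ 2 := by
      calc t n ^ 2 * r ^ 2 ≤ 1 * r ^ 2 :=
            mul_le_mul_of_nonneg_right ht2 (sq_nonneg r)
        _ = r ^ 2 := one_mul _
        _ ≤ M ^ 2 := hr2
    have h5 : t n ^ 2 * r ^ 2 / M ^ 2 ≤ 1 := by
      rw [div_le_one (by positivity)]; exact h4
    linarith
  calc d' = Real.sqrt (d' ^ 2) := (Real.sqrt_sq hd'0).symm
    _ ≤ Real.sqrt (d ^ 2 * (1 - t n ^ 2 * r ^ 2 / M ^ 2)) := Real.sqrt_le_sqrt hsq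
    _ = d * Real.sqrt (1 - t n ^ 2 * r ^ 2 / M ^ 2) := by
        rw [Real.sqrt_mul (sq_nonneg d), Real.sqrt_sq hd0]
end

section
/- Let {x_n} be a sequence in a Hilbert space H and C a nonempty closed convex set such that |x_n − y| is nonincreasing in n for every y ∈ C. Then {x_n} has at most one weak cluster point belonging to C; i.e., if subsequences of {x_n} converge weakly to v ∈ C and to w ∈ C, then v = w. -/
/-! Fejér monotonicity makes `‖x n - v‖` and `‖x n - w‖` converge. Expanding the squares,
`2 ⟪x n, v - w⟫ = ‖x n - w‖² - ‖x n - v‖² + ‖v‖² - ‖w‖²`, so the whole sequence `⟪x n, v - w⟫`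
converges. Along the two subsequences its limit is `⟪v, v - w⟫` and `⟪w, v - w⟫`, whence
`‖v - w‖² = 0`. -/

open Filter Topology
open scoped InnerProductSpace

theorem exists_tendsto_norm_sub_of_norm_sub_succ_le {E : Type*} [SeminormedAddCommGroup E]
    {x : ℕ → E} {y : E}
    (hy : ∀ n, ‖x (n + 1) - y‖ ≤ ‖x n - y‖) :
    ∃ a : ℝ, Tendsto (fun n => ‖x n - y‖) atTop (𝓝 a) :=
  ⟨_, tendsto_atTop_ciInf (antitone_nat_of_succ_le hy) ⟨0, by rintro _ ⟨n, rfl⟩; positivity⟩⟩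

section InnerProduct

variable {H : Type*} [NormedAddCommGroup H] [InnerProductSpace ℝ H]

theorem real_inner_sub_right_eq_norm_sub_sq (z v w : H) :
    ⟪z, v - w⟫_ℝ = (‖z - w‖ ^ 2 - ‖z - v‖ ^ 2 + ‖v‖ ^ 2 - ‖w‖ ^ 2) / 2 := by
  rw [inner_sub_right, norm_sub_sq_real z v, norm_sub_sq_real z w]
  ring

theorem exists_tendsto_inner_sub_of_tendsto_norm_sub {x : ℕ → H} {v w : H} {a b : ℝ}
    (hv : Tendsto (fun n => ‖x n - v‖) atTop (𝓝 a))
    (hw : Tendsto (fun n => ‖x n - w‖) atTop (𝓝 b)) :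
    ∃ L : ℝ, Tendsto (fun n => ⟪x n, v - w⟫_ℝ) atTop (𝓝 L) := by
  simp only [real_inner_sub_right_eq_norm_sub_sq]
  exact ⟨_, ((((hw.pow 2).sub (hv.pow 2)).add_const _).sub_const _).div_const 2⟩

theorem eq_of_real_inner_sub_right_eq {v w : H} (h : ⟪v, v - w⟫_ℝ = ⟪w, v - w⟫_ℝ) : v = w := by
  rw [← sub_eq_zero, ← inner_self_eq_zero (𝕜 := ℝ), inner_sub_left, h, sub_self]

end InnerProduct

theorem stmt_11_general {H : Type*} [NormedAddCommGroup H] [InnerProductSpace ℝ H]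
    (C : Set H)
    (x : ℕ → H)
    (hfejer : ∀ y ∈ C, ∀ n, ‖x (n + 1) - y‖ ≤ ‖x n - y‖)
    (v w : H) (hv : v ∈ C) (hw : w ∈ C)
    (φ ψ : ℕ → ℕ) (hφ : StrictMono φ) (hψ : StrictMono ψ)
    (hvw : ∀ y : H, Tendsto (fun k => (inner ℝ (x (φ k)) y : ℝ)) atTop (nhds (inner ℝ v y)))
    (hww : ∀ y : H, Tendsto (fun k => (inner ℝ (x (ψ k)) y : ℝ)) atTop (nhds (inner ℝ w y))) :
    v = w := by
  obtain ⟨a, ha⟩ := exists_tendsto_norm_sub_of_norm_sub_succ_le (hfejer v hv)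
  obtain ⟨b, hb⟩ := exists_tendsto_norm_sub_of_norm_sub_succ_le (hfejer w hw)
  obtain ⟨L, hL⟩ := exists_tendsto_inner_sub_of_tendsto_norm_sub ha hb
  have hLv : ⟪v, v - w⟫_ℝ = L :=
    tendsto_nhds_unique (hvw (v - w)) (hL.comp hφ.tendsto_atTop)
  have hLw : ⟪w, v - w⟫_ℝ = L :=
    tendsto_nhds_unique (hww (v - w)) (hL.comp hψ.tendsto_atTop)
  exact eq_of_real_inner_sub_right_eq (hLv.trans hLw.symm)

theorem stmt_11 {H : Type*} [NormedAddCommGroup H] [InnerProductSpace ℝ H]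
    (C : Set H) (hC : C.Nonempty) (hclosed : IsClosed C) (hconv : Convex ℝ C)
    (x : ℕ → H)
    (hfejer : ∀ y ∈ C, ∀ n, ‖x (n + 1) - y‖ ≤ ‖x n - y‖)
    (v w : H) (hv : v ∈ C) (hw : w ∈ C)
    (φ ψ : ℕ → ℕ) (hφ : StrictMono φ) (hψ : StrictMono ψ)
    (hvw : ∀ y : H, Tendsto (fun k => (inner ℝ (x (φ k)) y : ℝ)) atTop (nhds (inner ℝ v y)))
    (hww : ∀ y : H, Tendsto (fun k => (inner ℝ (x (ψ k)) y : ℝ)) atTop (nhds (inner ℝ w y))) :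
    v = w :=
  stmt_11_general C x hfejer v w hv hw φ ψ hφ hψ hvw hww
end

section
/- Let {C_α} be closed convex sets in a Hilbert space H with C = ⋂_α C_α ≠ ∅, let {t_n} ⊂ [0,1] with ∑ t_n² = ∞, and let {x_n} be a sequence of remote projections with parameters {t_n} starting from any x₀ ∈ H. Then there is a subsequence of {x_n} along which sup_α dist(x_n, C_α) → 0, and in particular {x_n} has a weak cluster point belonging to C. -/
/-!
Nearest-point maps onto sets containing a common point `c` are Fejér monotone:
`‖x (n+1) - c‖² + ‖x n - x (n+1)‖² ≤ ‖x n - c‖²`. Hence `∑ ‖x n - x (n+1)‖² < ∞`, and since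
`‖x n - x (n+1)‖ = dist (x n) (C (α n)) ≥ t n * sup_β dist (x n) (C β)`, the divergence of `∑ t n²`
prevents `sup_β dist (x n) (C β)` from staying away from `0`. The sequence is bounded, so along a
further subsequence it converges weakly, and since convex sets are weakly closed the weak limit
lies in every `C β`.
-/

open Filter Topology Metric

theorem infDist_eq_norm_sub_of_nearest {E : Type*} [SeminormedAddCommGroup E] {K : Set E}
    {u p : E} (hp : p ∈ K) (hnear : ∀ y ∈ K, ‖u - p‖ ≤ ‖u - y‖) : infDist u K = ‖u - p‖ := by
  refine le_antisymm ?_ ((le_infDist ⟨p, hp⟩).2 fun y hy => ?_)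
  · simpa only [dist_eq_norm] using infDist_le_dist_of_mem hp
  · simpa only [dist_eq_norm] using hnear y hy

theorem infDist_le_iSup_infDist {X ι : Type*} [PseudoMetricSpace X] {C : ι → Set X} {c : X}
    (hc : ∀ i, c ∈ C i) (x : X) (i : ι) : infDist x (C i) ≤ ⨆ j, infDist x (C j) :=
  le_ciSup ⟨dist x c, Set.forall_mem_range.2 fun j => infDist_le_dist_of_mem (hc j)⟩ i

section NearestPoint

variable {H : Type*} [NormedAddCommGroup H] [InnerProductSpace ℝ H] {K : Set H} {u p : H}

theorem real_inner_sub_le_zero_of_nearest (hK : Convex ℝ K) (hp : p ∈ K)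
    (hnear : ∀ y ∈ K, ‖u - p‖ ≤ ‖u - y‖) {y : H} (hy : y ∈ K) :
    inner ℝ (u - p) (y - p) ≤ 0 := by
  have : Nonempty K := ⟨⟨p, hp⟩⟩
  refine (norm_eq_iInf_iff_real_inner_le_zero hK hp).mp ?_ y hy
  have hbdd : BddBelow (Set.range fun z : K => ‖u - z‖) :=
    ⟨0, Set.forall_mem_range.2 fun z => norm_nonneg _⟩
  exact le_antisymm (le_ciInf fun z => hnear z z.2) (ciInf_le hbdd ⟨p, hp⟩)

theorem norm_sub_sq_add_norm_sub_sq_le_of_nearest (hK : Convex ℝ K) (hp : p ∈ K)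
    (hnear : ∀ y ∈ K, ‖u - p‖ ≤ ‖u - y‖) {c : H} (hc : c ∈ K) :
    ‖p - c‖ ^ 2 + ‖u - p‖ ^ 2 ≤ ‖u - c‖ ^ 2 := by
  have hobtuse := real_inner_sub_le_zero_of_nearest hK hp hnear hc
  have hacute : 0 ≤ inner ℝ (u - p) (p - c) := by
    rw [← neg_sub c p, inner_neg_right]
    linarith
  have hsplit := norm_add_sq_real (u - p) (p - c)
  rw [sub_add_sub_cancel] at hsplit
  linarith

theorem mem_of_tendsto_inner_of_tendsto_norm_sub (hK : Convex ℝ K) {w : H} (hp : p ∈ K)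
    (hnear : ∀ y ∈ K, ‖w - p‖ ≤ ‖w - y‖) {v y : ℕ → H} (hy : ∀ k, y k ∈ K)
    (hweak : ∀ z, Tendsto (fun k => inner ℝ (v k) z) atTop (𝓝 (inner ℝ w z)))
    (hvy : Tendsto (fun k => ‖v k - y k‖) atTop (𝓝 0)) : w ∈ K := by
  have hkey : ∀ k, ‖w - p‖ ^ 2 ≤
      (inner ℝ w (w - p) - inner ℝ (v k) (w - p)) + ‖v k - y k‖ * ‖w - p‖ := by
    intro k
    have hobtuse := real_inner_sub_le_zero_of_nearest hK hp hnear (hy k)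
    have hcs := real_inner_le_norm (v k - y k) (w - p)
    have hsplit : (w - v k) + (v k - y k) + (y k - p) = w - p := by abel
    rw [← real_inner_self_eq_norm_sq]
    nth_rewrite 1 [← hsplit]
    rw [inner_add_left, inner_add_left, inner_sub_left, real_inner_comm (w - p) (y k - p)]
    linarith
  have hlim : Tendsto (fun k => (inner ℝ w (w - p) - inner ℝ (v k) (w - p)) +
      ‖v k - y k‖ * ‖w - p‖) atTop (𝓝 0) := by
    simpa using ((tendsto_const_nhds (x := inner ℝ w (w - p))).sub (hweak (w - p))).add
      (hvy.mul_const ‖w - p‖)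
  have hzero : ‖w - p‖ ^ 2 ≤ 0 := ge_of_tendsto' hlim hkey
  have hwp : w = p := sub_eq_zero.mp <| norm_eq_zero.mp <|
    (pow_eq_zero_iff two_ne_zero).mp (le_antisymm hzero (sq_nonneg _))
  exact hwp ▸ hp

end NearestPoint

theorem summable_of_succ_add_le {a b : ℕ → ℝ} (ha : ∀ n, 0 ≤ a n) (hb : ∀ n, 0 ≤ b n)
    (h : ∀ n, a (n + 1) + b n ≤ a n) : Summable b := by
  refine summable_of_sum_range_le hb (c := a 0) fun n => ?_
  have hpartial : ∀ n, ∑ i ∈ Finset.range n, b i + a n ≤ a 0 := by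
    intro n
    induction n with
    | zero => simp
    | succ n ih => rw [Finset.sum_range_succ]; linarith [h n]
  linarith [hpartial n, ha n]

theorem exists_subseq_tendsto_zero_of_not_summable {t s : ℕ → ℝ}
    (hdiv : ¬ Summable fun n => t n ^ 2) (hsum : Summable fun n => (t n * s n) ^ 2) :
    ∃ φ : ℕ → ℕ, StrictMono φ ∧ Tendsto (s ∘ φ) atTop (𝓝 0) := by
  refine MapClusterPt.tendsto_subseq (mapClusterPt_iff_frequently.2 fun U hU => ?_)
  obtain ⟨ε, hε, hball⟩ := Metric.mem_nhds_iff.mp hU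
  refine fun hfar => hdiv <|
    Summable.of_norm_bounded_eventually_nat (hsum.div_const (ε ^ 2)) ?_
  filter_upwards [hfar] with n hn
  have hεs : ε ^ 2 ≤ s n ^ 2 := by
    have : ε ≤ |s n| := by
      by_contra! h
      exact hn (hball (by simpa [Real.dist_eq] using h))
    simpa using pow_le_pow_left₀ hε.le this 2
  rw [Real.norm_eq_abs, abs_of_nonneg (sq_nonneg _), le_div_iff₀ (by positivity), mul_pow]
  exact mul_le_mul_of_nonneg_left hεs (sq_nonneg _)

theorem exists_subseq_tendsto_inner {𝕜 H : Type*} [RCLike 𝕜] [NormedAddCommGroup H]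
    [InnerProductSpace 𝕜 H] [CompleteSpace H] {u : ℕ → H} {M : ℝ} (hu : ∀ k, ‖u k‖ ≤ M) :
    ∃ w : H, ∃ σ : ℕ → ℕ, StrictMono σ ∧
      ∀ y, Tendsto (fun k => inner 𝕜 (u (σ k)) y) atTop (𝓝 (inner 𝕜 w y)) := by
  -- Sequential Banach–Alaoglu in the separable closed span `K` of the sequence; the orthogonal
  -- projection onto `K` carries the weak limit back to all of `H`.
  set K := (Submodule.span 𝕜 (Set.range u)).topologicalClosure
  have : CompleteSpace K := (Submodule.isClosed_topologicalClosure _).completeSpace_coe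
  have : TopologicalSpace.SeparableSpace K :=
    (Set.countable_range u).isSeparable.span.closure.separableSpace
  have huK : ∀ k, u k ∈ K := fun k =>
    Submodule.le_topologicalClosure _ (Submodule.subset_span ⟨k, rfl⟩)
  let f : ℕ → WeakDual 𝕜 K := fun k =>
    WeakDual.toStrongDual.symm (InnerProductSpace.toDual 𝕜 K ⟨u k, huK k⟩)
  obtain ⟨F, -, σ, hσ, hF⟩ := WeakDual.isSeqCompact_closedBall 𝕜 K 0 M (x := f) fun k => by
    simpa [f] using hu k
  refine ⟨(InnerProductSpace.toDual 𝕜 K).symm (WeakDual.toStrongDual F), σ, hσ, fun y => ?_⟩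
  have hF' := tendsto_iff_forall_eval_tendsto_topDualPairing.mp hF
    (K.orthogonalProjectionOnto y)
  rw [← Submodule.inner_orthogonalProjectionOnto_eq_of_mem_left,
    InnerProductSpace.toDual_symm_apply]
  refine hF'.congr fun k => ?_
  exact InnerProductSpace.toDual_apply_apply.trans
    (Submodule.inner_orthogonalProjectionOnto_eq_of_mem_left ⟨u (σ k), huK _⟩ y)

theorem stmt_13_general {H : Type*} [NormedAddCommGroup H] [InnerProductSpace ℝ H]
    [CompleteSpace H]
    {Ω : Type*} (C : Ω → Set H)
    (hconv : ∀ α, Convex ℝ (C α))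
    (hCne : (⋂ α, C α).Nonempty)
    (P : Ω → H → H)
    (hPmem : ∀ α x, P α x ∈ C α)
    (hPnear : ∀ α x, ∀ y ∈ C α, ‖x - P α x‖ ≤ ‖x - y‖)
    (t : ℕ → ℝ) (ht : ∀ n, t n ∈ Set.Icc (0 : ℝ) 1)
    (hdiv : ¬ Summable (fun n => t n ^ 2))
    (α : ℕ → Ω) (x : ℕ → H)
    (hrec : ∀ n, x (n + 1) = P (α n) (x n))
    (hremote : ∀ n, t n * (⨆ β, Metric.infDist (x n) (C β)) ≤
      Metric.infDist (x n) (C (α n))) :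
    (∃ φ : ℕ → ℕ, StrictMono φ ∧
      Tendsto (fun k => ⨆ β, Metric.infDist (x (φ k)) (C β)) atTop (nhds 0)) ∧
    ∃ w ∈ ⋂ β, C β, ∃ ψ : ℕ → ℕ, StrictMono ψ ∧
      ∀ y : H, Tendsto (fun k => (inner ℝ (x (ψ k)) y : ℝ)) atTop (nhds (inner ℝ w y)) := by
  obtain ⟨c, hc⟩ := hCne
  rw [Set.mem_iInter] at hc
  have hdist : ∀ β z, infDist z (C β) = ‖z - P β z‖ := fun β z =>
    infDist_eq_norm_sub_of_nearest (hPmem β z) (hPnear β z)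
  have hfejer : ∀ n, ‖x (n + 1) - c‖ ^ 2 + ‖x n - x (n + 1)‖ ^ 2 ≤ ‖x n - c‖ ^ 2 := fun n => by
    rw [hrec]
    exact norm_sub_sq_add_norm_sub_sq_le_of_nearest (hconv _) (hPmem _ _) (hPnear _ _) (hc _)
  have hsum : Summable fun n => (t n * ⨆ β, infDist (x n) (C β)) ^ 2 := by
    refine (summable_of_succ_add_le (fun n => sq_nonneg ‖x n - c‖) (fun n => sq_nonneg _)
      hfejer).of_nonneg_of_le (fun n => sq_nonneg _) fun n => pow_le_pow_left₀ ?_ ?_ 2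
    · exact mul_nonneg (ht n).1 (Real.iSup_nonneg fun β => infDist_nonneg)
    · simpa only [hrec, hdist] using hremote n
  obtain ⟨φ, hφ, hSφ⟩ := exists_subseq_tendsto_zero_of_not_summable hdiv hsum
  have hanti : Antitone fun n => ‖x n - c‖ := antitone_nat_of_succ_le fun n =>
    (pow_le_pow_iff_left₀ (norm_nonneg _) (norm_nonneg _) two_ne_zero).mp
      (by linarith [hfejer n, sq_nonneg ‖x n - x (n + 1)‖])
  have hbound : ∀ n, ‖x n‖ ≤ ‖c‖ + ‖x 0 - c‖ := fun n => by
    linarith [norm_le_norm_add_norm_sub' (x n) c, hanti (Nat.zero_le n)]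
  obtain ⟨w, σ, hσ, hweak⟩ := exists_subseq_tendsto_inner (𝕜 := ℝ) fun k => hbound (φ k)
  refine ⟨⟨φ, hφ, hSφ⟩, w, Set.mem_iInter.2 fun β => ?_, φ ∘ σ, hφ.comp hσ, hweak⟩
  refine mem_of_tendsto_inner_of_tendsto_norm_sub (hconv β) (hPmem β w) (hPnear β w)
    (fun k => hPmem β (x (φ (σ k)))) hweak ?_
  refine squeeze_zero (fun k => norm_nonneg _) (fun k => ?_) (hSφ.comp hσ.tendsto_atTop)
  rw [← hdist]
  exact infDist_le_iSup_infDist hc _ β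

theorem stmt_13 {H : Type*} [NormedAddCommGroup H] [InnerProductSpace ℝ H]
    [CompleteSpace H]
    {Ω : Type*} [Nonempty Ω] (C : Ω → Set H)
    (hclosed : ∀ α, IsClosed (C α)) (hconv : ∀ α, Convex ℝ (C α))
    (hCne : (⋂ α, C α).Nonempty)
    (P : Ω → H → H)
    (hPmem : ∀ α x, P α x ∈ C α)
    (hPnear : ∀ α x, ∀ y ∈ C α, ‖x - P α x‖ ≤ ‖x - y‖)
    (t : ℕ → ℝ) (ht : ∀ n, t n ∈ Set.Icc (0 : ℝ) 1)
    (hdiv : ¬ Summable (fun n => t n ^ 2))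
    (α : ℕ → Ω) (x : ℕ → H)
    (hrec : ∀ n, x (n + 1) = P (α n) (x n))
    (hremote : ∀ n, t n * (⨆ β, Metric.infDist (x n) (C β)) ≤
      Metric.infDist (x n) (C (α n))) :
    (∃ φ : ℕ → ℕ, StrictMono φ ∧
      Tendsto (fun k => ⨆ β, Metric.infDist (x (φ k)) (C β)) atTop (nhds 0)) ∧
    ∃ w ∈ ⋂ β, C β, ∃ ψ : ℕ → ℕ, StrictMono ψ ∧
      ∀ y : H, Tendsto (fun k => (inner ℝ (x (ψ k)) y : ℝ)) atTop (nhds (inner ℝ w y)) :=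
  stmt_13_general C hconv hCne P hPmem hPnear t ht hdiv α x hrec hremote
end

section
/- If {t_n} ⊂ [0,1] satisfies ∑ t_n² < ∞, then there exist a real Hilbert space H, a countable family of closed linear subspaces with trivial intersection {0}, a starting point x₀, and a realization of remote projections with parameters {t_n} whose iterates x_n satisfy liminf |x_n| > 0; in particular, 0 is not a weak cluster point of {x_n}. -/
/-!
Take `H = ℓ²(ℕ)` and the coordinate hyperplanes `C k = {f | f k = 0}`, whose
intersection is `{0}`. Start at `x₀ = (1, t₀, t₁, …)`, which lies in `ℓ²` because
`∑ tₙ² < ∞`, and at step `n` project onto `C (n + 1)`, i.e. delete the coordinate `tₙ`.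
The distance of `xₙ` to `C k` is `|xₙ k| ≤ 1`, and equals `tₙ` for `k = n + 1`, so these
projections are remote with parameters `tₙ`. Coordinate `0` is never touched, so
`1 ≤ ‖xₙ‖ ≤ ‖x₀‖` and `⟪xₙ, e₀⟫ = 1` for every `n`.
-/

open Filter ENNReal

noncomputable section

namespace lp

section CoordHyperplane

variable {𝕜 ι : Type*} [NormedField 𝕜] {E : ι → Type*}
  [∀ i, NormedAddCommGroup (E i)] [∀ i, NormedSpace 𝕜 (E i)] {p : ℝ≥0∞}

variable (𝕜 E p) in
def coordHyperplane (i : ι) : Submodule 𝕜 (lp E p) :=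
  LinearMap.ker (lp.evalₗ E p i)

theorem mem_coordHyperplane {i : ι} {f : lp E p} : f ∈ coordHyperplane 𝕜 E p i ↔ f i = 0 :=
  Iff.rfl

theorem iInter_coordHyperplane : ⋂ i, (coordHyperplane 𝕜 E p i : Set (lp E p)) = {0} := by
  ext f
  simp only [Set.mem_iInter, SetLike.mem_coe, mem_coordHyperplane, Set.mem_singleton_iff]
  exact ⟨fun h => lp.ext (funext h), fun h i => by simp [h]⟩

theorem isClosed_coordHyperplane [Fact (1 ≤ p)] (i : ι) :
    IsClosed (coordHyperplane 𝕜 E p i : Set (lp E p)) :=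
  (lp.evalCLM 𝕜 E p i).isClosed_ker

theorem norm_apply_le_norm_sub_of_mem [Fact (1 ≤ p)] {i : ι} (f : lp E p) {y : lp E p}
    (hy : y ∈ coordHyperplane 𝕜 E p i) : ‖f i‖ ≤ ‖f - y‖ := by
  have hfy : (f - y) i = f i := by simp [mem_coordHyperplane.mp hy]
  simpa [hfy] using lp.norm_apply_le_norm (zero_lt_one.trans_le Fact.out).ne' (f - y) i

variable (p) in
def coordProj [DecidableEq ι] (i : ι) (f : lp E p) : lp E p :=
  f - lp.single p i (f i)

variable [DecidableEq ι]

theorem coordProj_apply (i : ι) (f : lp E p) (j : ι) :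
    coordProj p i f j = if j = i then 0 else f j := by
  by_cases h : j = i
  · subst h; simp [coordProj]
  · simp [coordProj, h]

theorem coordProj_mem (i : ι) (f : lp E p) : coordProj p i f ∈ coordHyperplane 𝕜 E p i := by
  simp [mem_coordHyperplane, coordProj_apply]

theorem norm_coordProj_le (hp : p ≠ 0) (i : ι) (f : lp E p) : ‖coordProj p i f‖ ≤ ‖f‖ :=
  lp.norm_mono hp fun j => by
    rw [coordProj_apply]; split_ifs <;> simp

variable [Fact (1 ≤ p)]

theorem norm_sub_coordProj (i : ι) (f : lp E p) : ‖f - coordProj p i f‖ = ‖f i‖ := by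
  rw [show f - coordProj p i f = lp.single p i (f i) from sub_sub_cancel _ _,
    lp.norm_single (zero_lt_one.trans_le Fact.out)]

theorem norm_sub_coordProj_le (i : ι) (f : lp E p) {y : lp E p}
    (hy : y ∈ coordHyperplane 𝕜 E p i) : ‖f - coordProj p i f‖ ≤ ‖f - y‖ :=
  norm_sub_coordProj i f ▸ norm_apply_le_norm_sub_of_mem f hy

theorem infDist_coordHyperplane (i : ι) (f : lp E p) :
    Metric.infDist f (coordHyperplane 𝕜 E p i) = ‖f i‖ := by
  refine le_antisymm ?_ ?_
  · simpa [dist_eq_norm, norm_sub_coordProj] using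
      Metric.infDist_le_dist_of_mem (x := f) (coordProj_mem (𝕜 := 𝕜) i f)
  · refine (Metric.le_infDist ⟨0, zero_mem _⟩).mpr fun y hy => ?_
    rw [dist_eq_norm]
    exact norm_apply_le_norm_sub_of_mem f hy

end CoordHyperplane

section DeleteCoords

variable {E : ℕ → Type*} [∀ i, NormedAddCommGroup (E i)] {p : ℝ≥0∞}

variable (p) in
def deleteCoords (x₀ : lp E p) : ℕ → lp E p
  | 0 => x₀
  | n + 1 => coordProj p (n + 1) (deleteCoords x₀ n)

theorem deleteCoords_apply (x₀ : lp E p) (n k : ℕ) :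
    deleteCoords p x₀ n k = if 1 ≤ k ∧ k ≤ n then 0 else x₀ k := by
  induction n with
  | zero => exact (if_neg (by omega)).symm
  | succ n ih =>
    rw [deleteCoords, coordProj_apply, ih]
    by_cases hk : k = n + 1
    · simp [hk]
    · simp only [hk, if_false]
      congr 1
      grind

theorem deleteCoords_apply_zero (x₀ : lp E p) (n : ℕ) : deleteCoords p x₀ n 0 = x₀ 0 := by
  simp [deleteCoords_apply]

theorem norm_deleteCoords_le (hp : p ≠ 0) (x₀ : lp E p) (n : ℕ) :
    ‖deleteCoords p x₀ n‖ ≤ ‖x₀‖ := by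
  induction n with
  | zero => rfl
  | succ n ih => exact (norm_coordProj_le hp _ _).trans ih

end DeleteCoords

end lp

theorem memℓp_two_of_summable_sq {ι : Type*} {f : ι → ℝ} (hf : Summable fun i => f i ^ 2) :
    Memℓp f 2 :=
  memℓp_gen <| by simpa [sq_abs] using hf

def consOne (t : ℕ → ℝ) : ℕ → ℝ
  | 0 => 1
  | n + 1 => t n

theorem abs_consOne_le_one {t : ℕ → ℝ} (ht : ∀ n, t n ∈ Set.Icc (0 : ℝ) 1) (k : ℕ) :
    |consOne t k| ≤ 1 := by
  cases k with
  | zero => simp [consOne]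
  | succ n =>
    show |t n| ≤ 1
    exact abs_le.mpr ⟨by linarith [(ht n).1], (ht n).2⟩

open lp in
theorem stmt_14 (t : ℕ → ℝ) (ht : ∀ n, t n ∈ Set.Icc (0 : ℝ) 1)
    (hsum : Summable (fun n => t n ^ 2)) :
    ∃ (H : Type) (_ : NormedAddCommGroup H) (_ : InnerProductSpace ℝ H)
      (_ : CompleteSpace H) (C : ℕ → Submodule ℝ H),
      (∀ k, IsClosed (C k : Set H)) ∧
      (⋂ k, (C k : Set H)) = {0} ∧
      ∃ (P : ℕ → H → H), (∀ k x, P k x ∈ C k) ∧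
        (∀ k x, ∀ y ∈ C k, ‖x - P k x‖ ≤ ‖x - y‖) ∧
        ∃ (x₀ : H) (α : ℕ → ℕ) (x : ℕ → H),
          x 0 = x₀ ∧
          (∀ n, x (n + 1) = P (α n) (x n)) ∧
          (∀ n, t n * (⨆ k, Metric.infDist (x n) (C k)) ≤
            Metric.infDist (x n) (C (α n))) ∧
          0 < atTop.liminf (fun n => ‖x n‖) ∧
          ¬ ∃ φ : ℕ → ℕ, StrictMono φ ∧
            ∀ y : H, Tendsto (fun k => (inner ℝ (x (φ k)) y : ℝ)) atTop (nhds 0) := by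
  let x₀ : ℓ²(ℕ, ℝ) :=
    ⟨consOne t, memℓp_two_of_summable_sq ((summable_nat_add_iff 1).mp hsum)⟩
  let x := deleteCoords 2 x₀
  have hx0 (n : ℕ) : x n 0 = 1 := deleteCoords_apply_zero x₀ n
  let C := coordHyperplane ℝ (fun _ : ℕ => ℝ) 2
  refine ⟨ℓ²(ℕ, ℝ), inferInstance, inferInstance, inferInstance, C,
    isClosed_coordHyperplane, iInter_coordHyperplane, coordProj 2, coordProj_mem,
    fun k f _ hy => norm_sub_coordProj_le k f hy, x₀, (· + 1), x, rfl, fun _ => rfl,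
    fun n => ?remote, ?liminf, ?weak⟩
  case remote =>
    have hsup : ⨆ k, Metric.infDist (x n) (C k) ≤ 1 :=
      ciSup_le fun k => by
        rw [infDist_coordHyperplane, deleteCoords_apply]
        split_ifs
        · simp
        · exact abs_consOne_le_one ht k
    have hnext : Metric.infDist (x n) (C (n + 1)) = t n := by
      rw [infDist_coordHyperplane, deleteCoords_apply, if_neg (by omega)]
      exact abs_of_nonneg (ht n).1
    rw [hnext]
    exact mul_le_of_le_one_right (ht n).1 hsup
  case liminf =>
    have hlower (n : ℕ) : 1 ≤ ‖x n‖ := by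
      simpa [hx0] using lp.norm_apply_le_norm two_ne_zero (x n) 0
    have hbdd : IsBoundedUnder (· ≤ ·) atTop fun n => ‖x n‖ :=
      isBoundedUnder_of ⟨‖x₀‖, norm_deleteCoords_le two_ne_zero x₀⟩
    exact zero_lt_one.trans_le (le_liminf_of_le hbdd.isCoboundedUnder_ge (.of_forall hlower))
  case weak =>
    rintro ⟨φ, -, hφ⟩
    have hinner (k : ℕ) : inner ℝ (x (φ k)) (lp.single 2 0 (1 : ℝ)) = 1 := by
      simp [lp.inner_single_right, hx0]
    have := hφ (lp.single 2 0 1)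
    simp only [hinner] at this
    exact one_ne_zero (tendsto_nhds_unique tendsto_const_nhds this)
end
end

section
/- Let C₁, …, C_K be closed convex subsets of a Hilbert space H with C = ⋂ C_j ≠ ∅, and let {α(n)} be a quasi-periodic index sequence with constant M (every block of M consecutive indices contains all of 1,…,K). Define x_{n+1} = P_{α(n)}x_n and b_n = max_k dist(x_n, C_k), t_n = |x_{n+1} − x_n| / b_n (when b_n > 0). Then for every m, there exists j ∈ {0,…,M} with t_{m+j} ≥ 1/(6M). -/
theorem stmt_15 {H : Type*} [NormedAddCommGroup H] [InnerProductSpace ℝ H]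
    {K : ℕ} (hK : 0 < K) (C : Fin K → Set H)
    (hclosed : ∀ k, IsClosed (C k)) (hconv : ∀ k, Convex ℝ (C k))
    (hCne : (⋂ k, C k).Nonempty)
    (P : Fin K → H → H)
    (hPmem : ∀ k x, P k x ∈ C k)
    (hPnear : ∀ k x, ∀ y ∈ C k, ‖x - P k x‖ ≤ ‖x - y‖)
    (M : ℕ) (hM : 0 < M)
    (α : ℕ → Fin K)
    (hquasi : ∀ n : ℕ, ∀ k : Fin K, ∃ i, n ≤ i ∧ i < n + M ∧ α i = k)
    (x : ℕ → H)
    (hrec : ∀ n, x (n + 1) = P (α n) (x n))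
    (b : ℕ → ℝ) (hb : ∀ n, b n = ⨆ k, Metric.infDist (x n) (C k))
    (hbpos : ∀ n, 0 < b n)
    (t : ℕ → ℝ) (htdef : ∀ n, t n = ‖x (n + 1) - x n‖ / b n) :
    ∀ m : ℕ, ∃ j ≤ M, 1 / (6 * (M : ℝ)) ≤ t (m + j) := by
  intro m
  by_contra hcon
  push_neg at hcon
  have hMr : (0:ℝ) < M := by exact_mod_cast hM
  have hMr1 : (1:ℝ) ≤ M := by exact_mod_cast hM
  obtain ⟨z, hz⟩ := hCne
  have hzk : ∀ k, z ∈ C k := by simpa [Set.mem_iInter] using hz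
  haveI : Nonempty (Fin K) := ⟨⟨0, hK⟩⟩
  -- infDist equals the distance to the projection
  have hinf : ∀ k n, Metric.infDist (x n) (C k) = ‖x n - P k (x n)‖ := by
    intro k n
    apply le_antisymm
    · simpa [dist_eq_norm] using Metric.infDist_le_dist_of_mem (hPmem k (x n))
    · rw [Metric.infDist_eq_iInf]
      haveI : Nonempty (C k) := ⟨⟨z, hzk k⟩⟩
      exact le_ciInf fun y => by
        simpa [dist_eq_norm] using hPnear k (x n) y y.2
  -- each infDist is ≤ b n
  have hle_b : ∀ k n, Metric.infDist (x n) (C k) ≤ b n := by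
    intro k n
    rw [hb n]
    exact le_ciSup (f := fun k => Metric.infDist (x n) (C k))
      (Set.Finite.bddAbove (Set.finite_range _)) k
  -- b n is attained at some k
  have hatt : ∀ n, ∃ k, b n = Metric.infDist (x n) (C k) := by
    intro n
    obtain ⟨k, hk⟩ := Finite.exists_max fun k => Metric.infDist (x n) (C k)
    exact ⟨k, le_antisymm (by rw [hb n]; exact ciSup_le hk) (hle_b k n)⟩
  -- step size
  set s : ℕ → ℝ := fun n => ‖x (n + 1) - x n‖ with hs
  have hstep : ∀ n, t n < 1 / (6 * (M:ℝ)) → s n < b n / (6 * M) := by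
    intro n hn
    have hsn : s n = t n * b n := by
      show ‖x (n + 1) - x n‖ = t n * b n
      rw [htdef n, div_mul_cancel₀ _ (hbpos n).ne']
    rw [hsn]
    calc t n * b n < 1 / (6 * M) * b n := mul_lt_mul_of_pos_right hn (hbpos n)
    _ = b n / (6 * M) := by ring
  -- b (n+1) ≤ b n + s n
  have hbstep : ∀ n, b (n + 1) ≤ b n + s n := by
    intro n
    rw [hb (n+1)]
    apply ciSup_le
    intro k
    calc Metric.infDist (x (n+1)) (C k)
        ≤ Metric.infDist (x n) (C k) + dist (x (n+1)) (x n) :=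
          Metric.infDist_le_infDist_add_dist
      _ ≤ b n + s n := by
          have := hle_b k n
          rw [dist_eq_norm]
          exact add_le_add this le_rfl
  -- growth bound: b (m + j) ≤ b m * (1 + j / (3 M)) for j ≤ M
  have hgrow : ∀ j, j ≤ M → b (m + j) ≤ b m * (1 + j / (3 * M)) := by
    intro j hj
    induction j with
    | zero => simp
    | succ j ih =>
      have hjM : j ≤ M := Nat.le_of_succ_le hj
      have ihj := ih hjM
      have h2 : b (m + j) ≤ 2 * b m := by
        have hjr : (j : ℝ) ≤ M := by exact_mod_cast hjM
        have hd : (j : ℝ) / (3 * M) ≤ 1 := by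
          rw [div_le_one (by positivity)]; nlinarith
        nlinarith [hbpos m]
      have hsj : s (m + j) < b (m + j) / (6 * M) := hstep _ (hcon j hjM)
      have : b (m + j + 1) ≤ b (m + j) + b (m + j) / (6 * M) :=
        le_trans (hbstep (m + j)) (by linarith)
      have hb2 : b (m + j) / (6 * M) ≤ 2 * b m / (6 * M) := by
        apply div_le_div_of_nonneg_right h2 (by positivity) |>.trans_eq rfl
      have : b (m + j + 1) ≤ b m * (1 + j / (3 * M)) + 2 * b m / (6 * M) := by
        linarith
      calc b (m + (j + 1)) = b (m + j + 1) := by ring_nf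
        _ ≤ b m * (1 + j / (3 * M)) + 2 * b m / (6 * M) := this
        _ = b m * (1 + (j + 1) / (3 * M)) := by field_simp; ring
        _ = b m * (1 + (↑(j + 1)) / (3 * M)) := by push_cast; ring
  have hgrow2 : ∀ j, j ≤ M → b (m + j) ≤ 2 * b m := by
    intro j hj
    have := hgrow j hj
    have hjr : (j : ℝ) ≤ M := by exact_mod_cast hj
    have hd : (j : ℝ) / (3 * M) ≤ 1 := by
      rw [div_le_one (by positivity)]; nlinarith
    nlinarith [hbpos m, hgrow j hj]
  -- small step bound for all n in the block
  have hsmall : ∀ j, j ≤ M → s (m + j) ≤ b m / (3 * M) := by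
    intro j hj
    have h1 := hstep _ (hcon j hj)
    have h2 := hgrow2 j hj
    have : b (m + j) / (6 * M) ≤ 2 * b m / (6 * M) :=
      div_le_div_of_nonneg_right h2 (by positivity) |>.trans_eq rfl
    have : s (m + j) ≤ 2 * b m / (6 * M) := le_trans h1.le this
    calc s (m + j) ≤ 2 * b m / (6 * M) := this
      _ = b m / (3 * M) := by ring
  -- pick k attaining b m, and i with α i = k
  obtain ⟨k, hk⟩ := hatt m
  obtain ⟨i, hmi, hiM, hαi⟩ := hquasi m k
  set j := i - m with hjdef
  have hij : i = m + j := by omega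
  have hjM : j < M := by omega
  -- telescoping
  have htel : dist (x m) (x i) ≤ (j : ℝ) * (b m / (3 * M)) := by
    calc dist (x m) (x i) ≤ ∑ l ∈ Finset.Ico m i, dist (x l) (x (l + 1)) :=
          dist_le_Ico_sum_dist x hmi
      _ ≤ ∑ l ∈ Finset.Ico m i, b m / (3 * M) := by
          apply Finset.sum_le_sum
          intro l hl
          simp only [Finset.mem_Ico] at hl
          have : dist (x l) (x (l + 1)) = s l := by
            rw [dist_eq_norm, norm_sub_rev]
          rw [this]
          have : l = m + (l - m) := by omega
          rw [this]
          exact hsmall (l - m) (by omega)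
      _ = (j : ℝ) * (b m / (3 * M)) := by
          rw [Finset.sum_const, Nat.card_Ico]
          simp [hjdef, nsmul_eq_mul]
  have hjle : (j : ℝ) ≤ M := by exact_mod_cast hjM.le
  have htel2 : dist (x m) (x i) ≤ b m / 3 := by
    calc dist (x m) (x i) ≤ (j : ℝ) * (b m / (3 * M)) := htel
      _ ≤ M * (b m / (3 * M)) := by
          exact mul_le_mul_of_nonneg_right hjle
            (div_nonneg (hbpos m).le (by positivity))
      _ = b m / 3 := by field_simp
  -- lower bound on s i
  have hsi_eq : s i = Metric.infDist (x i) (C k) := by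
    rw [hinf k i, hs]
    simp only []
    rw [hrec i, hαi, norm_sub_rev]
  have hlow : 2 * b m / 3 ≤ s i := by
    have h1 : b m ≤ Metric.infDist (x i) (C k) + dist (x m) (x i) := by
      rw [hk]
      exact Metric.infDist_le_infDist_add_dist
    rw [hsi_eq]
    linarith
  -- upper bound contradiction
  have hup : s i < b m / (3 * M) := by
    rw [hij]
    exact lt_of_lt_of_le (hstep _ (hcon j hjM.le)) (by
      have := hgrow2 j hjM.le
      calc b (m + j) / (6 * M) ≤ 2 * b m / (6 * M) :=
            div_le_div_of_nonneg_right this (by positivity)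
        _ = b m / (3 * M) := by ring)
  have hbm := hbpos m
  have : b m / (3 * M) ≤ 2 * b m / 3 := by
    rw [div_le_div_iff₀ (by positivity) (by norm_num)]
    nlinarith
  linarith
end

section
/- Let {C_α} be a family of closed convex subsets of a real Hilbert space H such that the affine hull of C = ⋂_α C_α is dense in H. Then any sequence x_{n+1} = P_{α(n)}x_n of consecutive metric projections onto sets of the family (in arbitrary order) converges weakly for every starting point x₀ ∈ H. -/
/-!
Nearest-point projections onto convex sets containing `C = ⋂ α, C α` do not increase the distance
to any point of `C`, so the iterates form a Fejér monotone sequence: it is bounded and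
`‖x n - v‖` converges for every `v ∈ C`. Polarization turns this into convergence of
`⟪x n, v - a⟫` for `v ∈ C` and a fixed `a ∈ C`. The vectors `v - a` span the direction of the
affine hull of `C`, which is dense, and for a bounded sequence the set of `y` for which `⟪x n, y⟫`
converges is a closed subspace. Hence `⟪x n, y⟫` converges for every `y`, and by Banach–Steinhaus
and the Riesz representation the limit is `⟪w, y⟫` for some `w`.
-/

open Filter Topology InnerProductSpace
open scoped NNReal

theorem isClosed_setOf_cauchySeq_of_lipschitzWith {X α : Type*} [PseudoMetricSpace X]
    [PseudoMetricSpace α] {F : ℕ → X → α} {K : ℝ≥0} (hF : ∀ n, LipschitzWith K (F n)) :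
    IsClosed {y | CauchySeq fun n => F n y} := by
  refine isClosed_of_closure_subset fun y hy => Metric.cauchySeq_iff.2 fun ε hε => ?_
  obtain ⟨z, hz, hyz⟩ := Metric.mem_closure_iff.1 hy (ε / 3 / (K + 1)) (by positivity)
  obtain ⟨N, hN⟩ := Metric.cauchySeq_iff.1 hz (ε / 3) (by positivity)
  have hclose : ∀ n, dist (F n y) (F n z) < ε / 3 := fun n =>
    calc dist (F n y) (F n z) ≤ K * dist y z := (hF n).dist_le_mul y z
      _ ≤ (K + 1) * dist y z := by gcongr; linarith
      _ < (K + 1) * (ε / 3 / (K + 1)) := by gcongr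
      _ = ε / 3 := by field_simp
  refine ⟨N, fun m hm n hn => ?_⟩
  calc dist (F m y) (F n y)
      ≤ dist (F m y) (F m z) + dist (F m z) (F n z) + dist (F n z) (F n y) := dist_triangle4 ..
    _ < ε / 3 + ε / 3 + ε / 3 := by
      gcongr
      · exact hclose m
      · exact hN m hm n hn
      · rw [dist_comm]; exact hclose n
    _ = ε := by ring

section ConvergenceSubmodule

variable {𝕜 E F : Type*} [NontriviallyNormedField 𝕜] [NormedAddCommGroup E] [NormedSpace 𝕜 E]
  [NormedAddCommGroup F] [NormedSpace 𝕜 F]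

def convergenceSubmodule (g : ℕ → E →L[𝕜] F) : Submodule 𝕜 E where
  carrier := {y | ∃ l, Tendsto (fun n => g n y) atTop (𝓝 l)}
  add_mem' := fun ⟨l₁, h₁⟩ ⟨l₂, h₂⟩ => ⟨l₁ + l₂, by simpa only [map_add] using h₁.add h₂⟩
  zero_mem' := ⟨0, by simpa only [map_zero] using tendsto_const_nhds⟩
  smul_mem' c _ := fun ⟨l, h⟩ => ⟨c • l, by simpa only [map_smul] using h.const_smul c⟩

theorem isClosed_convergenceSubmodule [CompleteSpace F] {g : ℕ → E →L[𝕜] F} {K : ℝ≥0}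
    (hg : ∀ n, ‖g n‖₊ ≤ K) : IsClosed (convergenceSubmodule g : Set E) := by
  have hcauchy : (convergenceSubmodule g : Set E) = {y | CauchySeq fun n => g n y} :=
    Set.ext fun y => ⟨fun ⟨_, h⟩ => h.cauchySeq, cauchySeq_tendsto_of_complete⟩
  rw [hcauchy]
  exact isClosed_setOf_cauchySeq_of_lipschitzWith fun n => (g n).lipschitz.weaken (hg n)

theorem exists_tendsto_of_dense_span [CompleteSpace F] {g : ℕ → E →L[𝕜] F} {K : ℝ≥0}
    (hg : ∀ n, ‖g n‖₊ ≤ K) {S : Set E} (hS : Dense (Submodule.span 𝕜 S : Set E))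
    (hconv : ∀ y ∈ S, ∃ l, Tendsto (fun n => g n y) atTop (𝓝 l)) (y : E) :
    ∃ l, Tendsto (fun n => g n y) atTop (𝓝 l) :=
  (isClosed_convergenceSubmodule hg).closure_subset_iff.2 (Submodule.span_le.2 hconv) (hS y)

end ConvergenceSubmodule

theorem AffineSubspace.dense_direction {k E : Type*} [Ring k] [AddCommGroup E] [Module k E]
    [TopologicalSpace E] [IsTopologicalAddGroup E] {s : AffineSubspace k E} {p : E} (hp : p ∈ s) (hs : Dense (s : Set E)) :
    Dense (s.direction : Set E) := by
  rw [AffineSubspace.coe_direction_eq_vsub_set_right hp]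
  exact (Homeomorph.subRight p).surjective.denseRange.dense_image (continuous_sub_right p) hs

section Fejer

variable {H : Type*} [NormedAddCommGroup H]

def FejerMonotone (x : ℕ → H) (D : Set H) : Prop :=
  ∀ v ∈ D, Antitone fun n => ‖x n - v‖

namespace FejerMonotone

variable {x : ℕ → H} {D : Set H} {a : H}

theorem norm_le (hx : FejerMonotone x D) (ha : a ∈ D) (n : ℕ) : ‖x n‖ ≤ ‖x 0 - a‖ + ‖a‖ :=
  calc ‖x n‖ ≤ ‖x n - a‖ + ‖a‖ := norm_le_norm_sub_add _ _
    _ ≤ ‖x 0 - a‖ + ‖a‖ := by gcongr; exact hx a ha (Nat.zero_le n)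

theorem exists_tendsto_norm_sub (hx : FejerMonotone x D) {v : H} (hv : v ∈ D) :
    ∃ l, Tendsto (fun n => ‖x n - v‖) atTop (𝓝 l) :=
  ⟨_, tendsto_atTop_ciInf (hx v hv) ⟨0, Set.forall_mem_range.2 fun _ => norm_nonneg _⟩⟩

variable [InnerProductSpace ℝ H]

theorem exists_tendsto_inner_sub (hx : FejerMonotone x D) (ha : a ∈ D) {v : H} (hv : v ∈ D) :
    ∃ l, Tendsto (fun n => ⟪x n, v - a⟫_ℝ) atTop (𝓝 l) := by
  obtain ⟨la, hla⟩ := hx.exists_tendsto_norm_sub ha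
  obtain ⟨lv, hlv⟩ := hx.exists_tendsto_norm_sub hv
  have hpolar : ∀ n,
      ⟪x n, v - a⟫_ℝ = (‖x n - a‖ ^ 2 - ‖x n - v‖ ^ 2 + ‖v‖ ^ 2 - ‖a‖ ^ 2) / 2 := by
    intro n
    simp only [norm_sub_sq_real, inner_sub_right]
    ring
  simp only [hpolar]
  exact ⟨_, ((((hla.pow 2).sub (hlv.pow 2)).add_const _).sub_const _).div_const 2⟩

theorem exists_tendsto_inner [CompleteSpace H] (hx : FejerMonotone x D) (ha : a ∈ D)
    (hD : Dense (affineSpan ℝ D : Set H)) :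
    ∃ w : H, ∀ y : H, Tendsto (fun n => ⟪x n, y⟫_ℝ) atTop (𝓝 ⟪w, y⟫_ℝ) := by
  have hspan : Dense (Submodule.span ℝ ((· -ᵥ a) '' D) : Set H) := by
    rw [← vectorSpan_eq_span_vsub_set_right ℝ ha, ← direction_affineSpan]
    exact AffineSubspace.dense_direction (mem_affineSpan ℝ ha) hD
  have hbound : ∀ n, ‖innerSL ℝ (x n)‖₊ ≤ ‖x 0 - a‖₊ + ‖a‖₊ := fun n => by
    simpa [← NNReal.coe_le_coe] using hx.norm_le ha n
  have hlim := exists_tendsto_of_dense_span hbound hspan <| by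
    rintro _ ⟨v, hv, rfl⟩
    exact hx.exists_tendsto_inner_sub ha hv
  choose f hf using hlim
  let φ := continuousLinearMapOfTendsto (fun n => innerSL ℝ (x n)) (tendsto_pi_nhds.2 hf)
  refine ⟨(toDual ℝ H).symm φ, fun y => ?_⟩
  rw [toDual_symm_apply]
  exact hf y

end FejerMonotone

end Fejer

section Projection

variable {H : Type*} [NormedAddCommGroup H] [InnerProductSpace ℝ H]

theorem real_inner_sub_nonpos_of_isNearest {K : Set H} (hK : Convex ℝ K) {x p : H} (hp : p ∈ K)
    (hnear : ∀ y ∈ K, ‖x - p‖ ≤ ‖x - y‖) {v : H} (hv : v ∈ K) : ⟪x - p, v - p⟫_ℝ ≤ 0 := by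
  have : Nonempty K := ⟨⟨p, hp⟩⟩
  refine (norm_eq_iInf_iff_real_inner_le_zero hK hp).1
    (le_antisymm (le_ciInf fun y => hnear y y.2) ?_) v hv
  exact ciInf_le (f := fun y : K => ‖x - y‖) ⟨0, Set.forall_mem_range.2 fun _ => norm_nonneg _⟩
    ⟨p, hp⟩

theorem norm_sub_le_of_isNearest {K : Set H} (hK : Convex ℝ K) {x p : H} (hp : p ∈ K)
    (hnear : ∀ y ∈ K, ‖x - p‖ ≤ ‖x - y‖) {v : H} (hv : v ∈ K) : ‖p - v‖ ≤ ‖x - v‖ := by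
  have hangle := real_inner_sub_nonpos_of_isNearest hK hp hnear hv
  have hexpand : ‖x - v‖ ^ 2 = ‖x - p‖ ^ 2 - 2 * ⟪x - p, v - p⟫_ℝ + ‖p - v‖ ^ 2 := by
    rw [← sub_add_sub_cancel x p v, norm_add_sq_real, ← neg_sub v p, inner_neg_right]
    ring
  exact (sq_le_sq₀ (norm_nonneg _) (norm_nonneg _)).1 (by nlinarith [sq_nonneg ‖x - p‖])

theorem fejerMonotone_of_isNearest {Ω : Type*} {C : Ω → Set H} (hconv : ∀ α, Convex ℝ (C α))
    {P : Ω → H → H} (hPmem : ∀ α x, P α x ∈ C α)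
    (hPnear : ∀ α x, ∀ y ∈ C α, ‖x - P α x‖ ≤ ‖x - y‖) {α : ℕ → Ω} {x : ℕ → H}
    (hrec : ∀ n, x (n + 1) = P (α n) (x n)) : FejerMonotone x (⋂ α, C α) := fun _ hv =>
  antitone_nat_of_succ_le fun n => hrec n ▸
    norm_sub_le_of_isNearest (hconv _) (hPmem _ _) (hPnear _ _) (Set.mem_iInter.1 hv (α n))

end Projection

theorem stmt_17_general {H : Type*} [NormedAddCommGroup H] [InnerProductSpace ℝ H]
    [CompleteSpace H]
    {Ω : Type*} (C : Ω → Set H)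
    (hconv : ∀ α, Convex ℝ (C α))
    (hCne : (⋂ α, C α).Nonempty)
    (hdense : Dense ((affineSpan ℝ (⋂ α, C α) : AffineSubspace ℝ H) : Set H))
    (P : Ω → H → H)
    (hPmem : ∀ α x, P α x ∈ C α)
    (hPnear : ∀ α x, ∀ y ∈ C α, ‖x - P α x‖ ≤ ‖x - y‖)
    (α : ℕ → Ω) (x : ℕ → H)
    (hrec : ∀ n, x (n + 1) = P (α n) (x n)) :
    ∃ w : H, ∀ y : H,
      Tendsto (fun n => (inner ℝ (x n) y : ℝ)) atTop (nhds (inner ℝ w y)) := by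
  obtain ⟨a, ha⟩ := hCne
  exact (fejerMonotone_of_isNearest hconv hPmem hPnear hrec).exists_tendsto_inner ha hdense

theorem stmt_17 {H : Type*} [NormedAddCommGroup H] [InnerProductSpace ℝ H]
    [CompleteSpace H]
    {Ω : Type*} (C : Ω → Set H)
    (hclosed : ∀ α, IsClosed (C α)) (hconv : ∀ α, Convex ℝ (C α))
    (hCne : (⋂ α, C α).Nonempty)
    (hdense : Dense ((affineSpan ℝ (⋂ α, C α) : AffineSubspace ℝ H) : Set H))
    (P : Ω → H → H)
    (hPmem : ∀ α x, P α x ∈ C α)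
    (hPnear : ∀ α x, ∀ y ∈ C α, ‖x - P α x‖ ≤ ‖x - y‖)
    (α : ℕ → Ω) (x : ℕ → H)
    (hrec : ∀ n, x (n + 1) = P (α n) (x n)) :
    ∃ w : H, ∀ y : H,
      Tendsto (fun n => (inner ℝ (x n) y : ℝ)) atTop (nhds (inner ℝ w y)) :=
  stmt_17_general C hconv hCne hdense P hPmem hPnear α x hrec
end
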